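/- arXiv:math/0701312 — 6 statements merged into one kernel-verified Lean document; each statement's English description precedes it below -/
import Mathlib

section
/- Let n ≥ 2, let F, G be coprime completely reducible homogeneous polynomials of the same degree d ≥ 1 in R = MvPolynomial (Fin (n+1)) ℂ, let P_1 = F, P_2 = G, P_3, …, P_k be pairwise distinct completely reducible members of the pencil 𝒫, and let Q̃, Q, ω, a_i, D be as in the context. If D is not the zero polynomial, then (n−1)·k·d ≤ (n+1)·(2d−2) − 2·(k·d − deg Q); in particular (n−1)·k < 2(n+1), so k ≤ 5 whenever n ≥ 2, k ≤ 3 whenever n ≥ 3, and k ≤ 2 whenever n ≥ 5. -/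
open MvPolynomial

noncomputable section

/-- A linear form: a nonzero homogeneous polynomial of degree 1. -/
def IsLinearForm (n : ℕ) (α : MvPolynomial (Fin (n + 1)) ℂ) : Prop :=
  α ≠ 0 ∧ α.IsHomogeneous 1

/-- A completely reducible polynomial: a product of linear forms. -/
def CompletelyReducible (n : ℕ) (P : MvPolynomial (Fin (n + 1)) ℂ) : Prop :=
  ∃ s : Multiset (MvPolynomial (Fin (n + 1)) ℂ),
    (∀ α ∈ s, IsLinearForm n α) ∧ P = s.prod

/-- F and G have no common non-unit factor. -/
def RelPrime (n : ℕ) (F G : MvPolynomial (Fin (n + 1)) ℂ) : Prop :=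
  ∀ p : MvPolynomial (Fin (n + 1)) ℂ, p ∣ F → p ∣ G → IsUnit p

/-- The generic fiber of the pencil generated by F and G is irreducible. -/
def GenericFiberIrreducible (n : ℕ) (F G : MvPolynomial (Fin (n + 1)) ℂ) : Prop :=
  {c : ℂ | ¬ Irreducible (F + C c * G)}.Finite

section Helpers
open Finset
namespace PencilAux

variable {nv : ℕ}

lemma degree_sum_eq (d : Fin nv →₀ ℕ) : (d.sum fun _ e => e) = d.degree := rfl

lemma degree_fin (d : Fin nv →₀ ℕ) : d.degree = ∑ i, d i := by
  rw [Finsupp.degree]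
  exact Finset.sum_subset (Finset.subset_univ _) (by intro x _ hx; simpa using hx)

lemma degree_add (d e : Fin nv →₀ ℕ) : (d + e).degree = d.degree + e.degree := by
  simp [degree_fin, Finset.sum_add_distrib]

lemma isHomog_of_coeff {f : MvPolynomial (Fin nv) ℂ} {N : ℕ}
    (h : ∀ d, coeff d f ≠ 0 → d.degree = N) : f.IsHomogeneous N := by
  intro d hd
  rw [Pi.one_def, ← Finsupp.degree_eq_weight_one]
  exact h d hd

lemma degree_of_isHomog {f : MvPolynomial (Fin nv) ℂ} {N : ℕ} (h : f.IsHomogeneous N)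
    {d : Fin nv →₀ ℕ} (hd : coeff d f ≠ 0) : d.degree = N := by
  have := h hd
  rwa [Pi.one_def, ← Finsupp.degree_eq_weight_one] at this

lemma degree_le_totalDegree {f : MvPolynomial (Fin nv) ℂ} {d : Fin nv →₀ ℕ}
    (hd : coeff d f ≠ 0) : d.degree ≤ f.totalDegree := by
  rw [← degree_sum_eq]
  exact le_totalDegree (mem_support_iff.mpr hd)

/-- minimal degree of a monomial -/
def mdeg (f : MvPolynomial (Fin nv) ℂ) : ℕ :=
  sInf {k | ∃ d : Fin nv →₀ ℕ, coeff d f ≠ 0 ∧ d.degree = k}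

lemma mdeg_le_degree {f : MvPolynomial (Fin nv) ℂ} {d : Fin nv →₀ ℕ}
    (hd : coeff d f ≠ 0) : mdeg f ≤ d.degree :=
  Nat.sInf_le ⟨d, hd, rfl⟩

lemma mdeg_attained {f : MvPolynomial (Fin nv) ℂ} (hf : f ≠ 0) :
    ∃ d : Fin nv →₀ ℕ, coeff d f ≠ 0 ∧ d.degree = mdeg f := by
  obtain ⟨d, hd⟩ := exists_coeff_ne_zero hf
  have hne : {k | ∃ d : Fin nv →₀ ℕ, coeff d f ≠ 0 ∧ d.degree = k}.Nonempty := ⟨_, d, hd, rfl⟩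
  exact Nat.sInf_mem hne

lemma exists_top {f g : MvPolynomial (Fin nv) ℂ} (hf : f ≠ 0) (hg : g ≠ 0) :
    ∃ d : Fin nv →₀ ℕ, coeff d (f * g) ≠ 0 ∧ d.degree = f.totalDegree + g.totalDegree := by
  classical
  set Df := f.totalDegree with hDf
  set Dg := g.totalDegree with hDg
  set tf := homogeneousComponent Df f with htf
  set tg := homogeneousComponent Dg g with htg
  have hcf : ∀ d, coeff d tf = if d.degree = Df then coeff d f else 0 := by
    intro d; rw [htf, coeff_homogeneousComponent]
  have hcg : ∀ d, coeff d tg = if d.degree = Dg then coeff d g else 0 := by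
    intro d; rw [htg, coeff_homogeneousComponent]
  have htfne : tf ≠ 0 := by
    obtain ⟨d, hd, hdd⟩ := f.support.exists_mem_eq_sup
      (MvPolynomial.support_nonempty.mpr hf) (fun m => m.sum fun _ e => e)
    have hdf : coeff d f ≠ 0 := mem_support_iff.mp hd
    have hdeg : d.degree = Df := by rw [← degree_sum_eq, hDf, totalDegree, hdd]
    intro h0
    have := hcf d
    rw [h0, if_pos hdeg] at this
    exact hdf (by simpa using this.symm)
  have htgne : tg ≠ 0 := by
    obtain ⟨d, hd, hdd⟩ := g.support.exists_mem_eq_sup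
      (MvPolynomial.support_nonempty.mpr hg) (fun m => m.sum fun _ e => e)
    have hdg : coeff d g ≠ 0 := mem_support_iff.mp hd
    have hdeg : d.degree = Dg := by rw [← degree_sum_eq, hDg, totalDegree, hdd]
    intro h0
    have := hcg d
    rw [h0, if_pos hdeg] at this
    exact hdg (by simpa using this.symm)
  obtain ⟨d0, hd0⟩ := exists_coeff_ne_zero (mul_ne_zero htfne htgne)
  -- d0 decomposes
  have hd0mem : d0 ∈ (tf * tg).support := mem_support_iff.mpr hd0
  obtain ⟨d1, hd1, d2, hd2, hsum⟩ := Finset.mem_add.mp (support_mul tf tg hd0mem)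
  have hdeg1 : d1.degree = Df := by
    have := mem_support_iff.mp hd1
    rw [hcf d1] at this
    by_contra hne; rw [if_neg hne] at this; exact this rfl
  have hdeg2 : d2.degree = Dg := by
    have := mem_support_iff.mp hd2
    rw [hcg d2] at this
    by_contra hne; rw [if_neg hne] at this; exact this rfl
  have hdeg0 : d0.degree = Df + Dg := by
    rw [← hsum, degree_add, hdeg1, hdeg2]
  refine ⟨d0, ?_, hdeg0⟩
  -- coeff d0 (f*g) = coeff d0 (tf*tg)
  have hsplit : f * g = tf * tg + ((f - tf) * g + tf * (g - tg)) := by ring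
  have hz1 : coeff d0 ((f - tf) * g) = 0 := by
    by_contra hz
    obtain ⟨e1, he1, e2, he2, hesum⟩ :=
      Finset.mem_add.mp (support_mul _ _ (mem_support_iff.mpr hz))
    have he1c : coeff e1 (f - tf) ≠ 0 := mem_support_iff.mp he1
    have he1f : coeff e1 f ≠ 0 := by
      intro h0
      apply he1c
      rw [coeff_sub, h0, hcf e1]
      split <;> simp [h0]
    have he1ne : e1.degree ≠ Df := by
      intro hEq
      apply he1c
      rw [coeff_sub, hcf e1, if_pos hEq, sub_self]
    have h1lt : e1.degree < Df := lt_of_le_of_ne (degree_le_totalDegree he1f) he1ne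
    have h2le : e2.degree ≤ Dg := degree_le_totalDegree (mem_support_iff.mp he2)
    have : d0.degree < Df + Dg := by
      rw [← hesum, degree_add]; omega
    omega
  have hz2 : coeff d0 (tf * (g - tg)) = 0 := by
    by_contra hz
    obtain ⟨e1, he1, e2, he2, hesum⟩ :=
      Finset.mem_add.mp (support_mul _ _ (mem_support_iff.mpr hz))
    have he1deg : e1.degree = Df := by
      have := mem_support_iff.mp he1
      rw [hcf e1] at this
      by_contra hne; rw [if_neg hne] at this; exact this rfl
    have he2c : coeff e2 (g - tg) ≠ 0 := mem_support_iff.mp he2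
    have he2g : coeff e2 g ≠ 0 := by
      intro h0
      apply he2c
      rw [coeff_sub, h0, hcg e2]
      split <;> simp [h0]
    have he2ne : e2.degree ≠ Dg := by
      intro hEq
      apply he2c
      rw [coeff_sub, hcg e2, if_pos hEq, sub_self]
    have h2lt : e2.degree < Dg := lt_of_le_of_ne (degree_le_totalDegree he2g) he2ne
    have : d0.degree < Df + Dg := by
      rw [← hesum, degree_add]; omega
    omega
  rw [hsplit, coeff_add, coeff_add, hz1, hz2]
  simpa using hd0

lemma exists_bot {f g : MvPolynomial (Fin nv) ℂ} (hf : f ≠ 0) (hg : g ≠ 0) :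
    ∃ d : Fin nv →₀ ℕ, coeff d (f * g) ≠ 0 ∧ d.degree = mdeg f + mdeg g := by
  classical
  set Df := mdeg f with hDf
  set Dg := mdeg g with hDg
  set tf := homogeneousComponent Df f with htf
  set tg := homogeneousComponent Dg g with htg
  have hcf : ∀ d, coeff d tf = if d.degree = Df then coeff d f else 0 := by
    intro d; rw [htf, coeff_homogeneousComponent]
  have hcg : ∀ d, coeff d tg = if d.degree = Dg then coeff d g else 0 := by
    intro d; rw [htg, coeff_homogeneousComponent]
  have htfne : tf ≠ 0 := by
    obtain ⟨d, hdf, hdeg⟩ := mdeg_attained hf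
    intro h0
    have := hcf d
    rw [h0, if_pos hdeg] at this
    exact hdf (by simpa using this.symm)
  have htgne : tg ≠ 0 := by
    obtain ⟨d, hdg, hdeg⟩ := mdeg_attained hg
    intro h0
    have := hcg d
    rw [h0, if_pos hdeg] at this
    exact hdg (by simpa using this.symm)
  obtain ⟨d0, hd0⟩ := exists_coeff_ne_zero (mul_ne_zero htfne htgne)
  have hd0mem : d0 ∈ (tf * tg).support := mem_support_iff.mpr hd0
  obtain ⟨d1, hd1, d2, hd2, hsum⟩ := Finset.mem_add.mp (support_mul tf tg hd0mem)
  have hdeg1 : d1.degree = Df := by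
    have := mem_support_iff.mp hd1
    rw [hcf d1] at this
    by_contra hne; rw [if_neg hne] at this; exact this rfl
  have hdeg2 : d2.degree = Dg := by
    have := mem_support_iff.mp hd2
    rw [hcg d2] at this
    by_contra hne; rw [if_neg hne] at this; exact this rfl
  have hdeg0 : d0.degree = Df + Dg := by
    rw [← hsum, degree_add, hdeg1, hdeg2]
  refine ⟨d0, ?_, hdeg0⟩
  have hsplit : f * g = tf * tg + ((f - tf) * g + tf * (g - tg)) := by ring
  have hz1 : coeff d0 ((f - tf) * g) = 0 := by
    by_contra hz
    obtain ⟨e1, he1, e2, he2, hesum⟩ :=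
      Finset.mem_add.mp (support_mul _ _ (mem_support_iff.mpr hz))
    have he1c : coeff e1 (f - tf) ≠ 0 := mem_support_iff.mp he1
    have he1f : coeff e1 f ≠ 0 := by
      intro h0
      apply he1c
      rw [coeff_sub, h0, hcf e1]
      split <;> simp [h0]
    have he1ne : e1.degree ≠ Df := by
      intro hEq
      apply he1c
      rw [coeff_sub, hcf e1, if_pos hEq, sub_self]
    have h1lt : Df < e1.degree := lt_of_le_of_ne (mdeg_le_degree he1f) (Ne.symm he1ne)
    have h2le : Dg ≤ e2.degree := mdeg_le_degree (mem_support_iff.mp he2)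
    have : Df + Dg < d0.degree := by
      rw [← hesum, degree_add]; omega
    omega
  have hz2 : coeff d0 (tf * (g - tg)) = 0 := by
    by_contra hz
    obtain ⟨e1, he1, e2, he2, hesum⟩ :=
      Finset.mem_add.mp (support_mul _ _ (mem_support_iff.mpr hz))
    have he1deg : e1.degree = Df := by
      have := mem_support_iff.mp he1
      rw [hcf e1] at this
      by_contra hne; rw [if_neg hne] at this; exact this rfl
    have he2c : coeff e2 (g - tg) ≠ 0 := mem_support_iff.mp he2
    have he2g : coeff e2 g ≠ 0 := by
      intro h0
      apply he2c
      rw [coeff_sub, h0, hcg e2]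
      split <;> simp [h0]
    have he2ne : e2.degree ≠ Dg := by
      intro hEq
      apply he2c
      rw [coeff_sub, hcg e2, if_pos hEq, sub_self]
    have h2lt : Dg < e2.degree := lt_of_le_of_ne (mdeg_le_degree he2g) (Ne.symm he2ne)
    have : Df + Dg < d0.degree := by
      rw [← hesum, degree_add]; omega
    omega
  rw [hsplit, coeff_add, coeff_add, hz1, hz2]
  simpa using hd0

/-- key structural lemma: factors of a nonzero homogeneous polynomial are homogeneous -/
lemma homog_mul_split {f g : MvPolynomial (Fin nv) ℂ} {N : ℕ} (hf : f ≠ 0) (hg : g ≠ 0)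
    (h : (f * g).IsHomogeneous N) :
    f.IsHomogeneous f.totalDegree ∧ g.IsHomogeneous g.totalDegree ∧
      f.totalDegree + g.totalDegree = N := by
  obtain ⟨dt, hdt, hdtd⟩ := exists_top hf hg
  obtain ⟨db, hdb, hdbd⟩ := exists_bot hf hg
  have htop : f.totalDegree + g.totalDegree = N := by
    rw [← hdtd]; exact degree_of_isHomog h hdt
  have hbot : mdeg f + mdeg g = N := by
    rw [← hdbd]; exact degree_of_isHomog h hdb
  have hfl : mdeg f ≤ f.totalDegree := by
    obtain ⟨d, hd, hdd⟩ := mdeg_attained hf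
    rw [← hdd]; exact degree_le_totalDegree hd
  have hgl : mdeg g ≤ g.totalDegree := by
    obtain ⟨d, hd, hdd⟩ := mdeg_attained hg
    rw [← hdd]; exact degree_le_totalDegree hd
  have hfe : mdeg f = f.totalDegree := by omega
  have hge : mdeg g = g.totalDegree := by omega
  refine ⟨isHomog_of_coeff ?_, isHomog_of_coeff ?_, htop⟩
  · intro d hd
    have h1 := degree_le_totalDegree hd
    have h2 := mdeg_le_degree hd
    omega
  · intro d hd
    have h1 := degree_le_totalDegree hd
    have h2 := mdeg_le_degree hd
    omega

lemma isHomog_pderiv {f : MvPolynomial (Fin nv) ℂ} {N : ℕ} (h : f.IsHomogeneous N)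
    (i : Fin nv) : (pderiv i f).IsHomogeneous (N - 1) := by
  classical
  rw [f.as_sum, map_sum]
  apply MvPolynomial.IsHomogeneous.sum
  intro d hd
  rw [pderiv_monomial]
  by_cases hdi : d i = 0
  · rw [hdi]
    simp only [Nat.cast_zero, mul_zero, monomial_zero]
    exact isHomogeneous_zero _ _ _
  · apply isHomogeneous_monomial
    have hdeg : d.degree = N := degree_of_isHomog h (mem_support_iff.mp hd)
    have hcanc : (d - Finsupp.single i 1) + Finsupp.single i 1 = d := by
      ext j
      simp only [Finsupp.add_apply, Finsupp.tsub_apply, Finsupp.single_apply]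
      by_cases hji : i = j
      · subst hji; simp; omega
      · simp [hji]
    have hds : (Finsupp.single i (1:ℕ)).degree = 1 := by
      simp [degree_fin, Finsupp.single_apply]
    have := congrArg Finsupp.degree hcanc
    rw [degree_add, hds, hdeg] at this
    omega

lemma eq_C_of_isHomog_zero {f : MvPolynomial (Fin nv) ℂ} (h : f.IsHomogeneous 0) :
    f = C (coeff 0 f) := by
  ext d
  by_cases hd : d = 0
  · subst hd; simp
  · rw [coeff_C, if_neg (Ne.symm hd)]
    by_contra hc
    have := degree_of_isHomog h hc
    rw [Finsupp.degree_eq_zero_iff] at this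
    exact hd this

lemma totalDegree_one_of_linear {β : MvPolynomial (Fin nv) ℂ} (h0 : β ≠ 0)
    (h1 : β.IsHomogeneous 1) : β.totalDegree = 1 := h1.totalDegree h0

lemma not_isUnit_of_linear {β : MvPolynomial (Fin nv) ℂ} (h0 : β ≠ 0)
    (h1 : β.IsHomogeneous 1) : ¬ IsUnit β := by
  intro hu
  obtain ⟨γ, hγ⟩ := isUnit_iff_exists_inv.mp hu
  have hγ0 : γ ≠ 0 := by rintro rfl; simp at hγ
  have hone : (β * γ).IsHomogeneous 0 := by rw [hγ]; exact isHomogeneous_one _ _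
  obtain ⟨hb, hc, hsum⟩ := homog_mul_split h0 hγ0 hone
  rw [h1.totalDegree h0] at hsum
  omega

lemma prime_of_linear {β : MvPolynomial (Fin nv) ℂ} (h0 : β ≠ 0)
    (h1 : β.IsHomogeneous 1) : Prime β := by
  rw [← UniqueFactorizationMonoid.irreducible_iff_prime]
  constructor
  · exact not_isUnit_of_linear h0 h1
  · intro p q hpq
    have hp0 : p ≠ 0 := by rintro rfl; rw [zero_mul] at hpq; exact h0 hpq
    have hq0 : q ≠ 0 := by rintro rfl; rw [mul_zero] at hpq; exact h0 hpq
    have h1' : (p * q).IsHomogeneous 1 := by rw [← hpq]; exact h1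
    obtain ⟨hp, hq, hsum⟩ := homog_mul_split hp0 hq0 h1'
    rcases Nat.eq_zero_or_pos p.totalDegree with hz | hpos
    · left
      rw [hz] at hp
      have := eq_C_of_isHomog_zero hp
      have hc0 : coeff 0 p ≠ 0 := by
        intro hcc; rw [hcc, map_zero] at this; exact hp0 this
      rw [this]
      exact (isUnit_iff_ne_zero.mpr hc0).map C
    · right
      have hqz : q.totalDegree = 0 := by omega
      rw [hqz] at hq
      have := eq_C_of_isHomog_zero hq
      have hc0 : coeff 0 q ≠ 0 := by
        intro hcc; rw [hcc, map_zero] at this; exact hq0 this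
      rw [this]
      exact (isUnit_iff_ne_zero.mpr hc0).map C

lemma linear_dvd_linear {β γ : MvPolynomial (Fin nv) ℂ} (hβ0 : β ≠ 0)
    (hβ1 : β.IsHomogeneous 1) (hγ0 : γ ≠ 0) (hγ1 : γ.IsHomogeneous 1)
    (h : β ∣ γ) : ∃ t : ℂ, γ = C t * β := by
  obtain ⟨δ, hδ⟩ := h
  have hδ0 : δ ≠ 0 := by rintro rfl; rw [mul_zero] at hδ; exact hγ0 hδ
  have h1 : (β * δ).IsHomogeneous 1 := by rw [← hδ]; exact hγ1
  obtain ⟨hb, hd, hsum⟩ := homog_mul_split hβ0 hδ0 h1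
  rw [hβ1.totalDegree hβ0] at hsum
  have : δ.totalDegree = 0 := by omega
  rw [this] at hd
  refine ⟨coeff 0 δ, ?_⟩
  conv_lhs => rw [hδ, eq_C_of_isHomog_zero hd]
  ring

lemma prod_pow_dvd {ι : Type*} [Fintype ι] [DecidableEq ι]
    (β : ι → MvPolynomial (Fin nv) ℂ) (hp : ∀ i, Prime (β i))
    (hnd : ∀ i j, i ≠ j → ¬ β i ∣ β j) (e : ℕ) (D : MvPolynomial (Fin nv) ℂ)
    (hD : ∀ i, β i ^ e ∣ D) : (∏ i, β i ^ e) ∣ D := by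
  classical
  suffices h : ∀ s : Finset ι, (∏ i ∈ s, β i ^ e) ∣ D from h univ
  intro s
  induction s using Finset.induction_on with
  | empty => simpa using one_dvd D
  | insert j s' hj ih =>
    obtain ⟨E, hE⟩ := ih
    have hdvd : β j ^ e ∣ (∏ i ∈ s', β i ^ e) * E := hE ▸ hD j
    have hndp : ¬ β j ∣ ∏ i ∈ s', β i ^ e := by
      intro hc
      obtain ⟨i, hi, hdv⟩ := (Prime.dvd_finset_prod_iff (hp j) _).mp hc
      have : β j ∣ β i := (hp j).dvd_of_dvd_pow hdv
      have hij : j ≠ i := by rintro rfl; exact hj hi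
      exact hnd j i hij this
    obtain ⟨E', hE'⟩ := (hp j).pow_dvd_of_dvd_mul_left e hndp hdvd
    refine ⟨E', ?_⟩
    rw [Finset.prod_insert hj, hE, hE']
    ring

/-- Key determinant lemma: if every row of a matrix has the form
`x i • u + r i • v + al • B i`, then `al ^ (N-2)` divides the determinant. -/
lemma det_dvd_aux {S : Type*} [CommRing S] {N : ℕ}
    (al : S) (x r : Fin N → S) (uu vv : Fin N → S) (B : Matrix (Fin N) (Fin N) S) :
    al ^ (N - 2) ∣ (Matrix.of fun i j => x i * uu j + r i * vv j + al * B i j).det := by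
  classical
  set f := (Matrix.detRowAlternating : (Fin N → S) [⋀^Fin N]→ₗ[S] S) with hf
  set g : Fin N → Fin 3 → (Fin N → S) := fun i p =>
    if p = 0 then x i • uu else if p = 1 then r i • vv else al • B i with hg
  have hrow : (Matrix.of fun i j => x i * uu j + r i * vv j + al * B i j) =
      fun i => ∑ p : Fin 3, g i p := by
    funext i j
    rw [Fin.sum_univ_three]
    simp [hg, smul_eq_mul]
  have hdet : (Matrix.of fun i j => x i * uu j + r i * vv j + al * B i j).det
      = ∑ p : Fin N → Fin 3, f.toMultilinearMap fun i => g i (p i) := by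
    rw [Matrix.det, hrow]
    exact f.toMultilinearMap.map_sum g
  rw [hdet]
  apply Finset.dvd_sum
  intro p _
  -- pull out the scalars
  set coef : Fin N → S := fun i => if p i = 0 then x i else if p i = 1 then r i else al
    with hcoef
  set base : Fin N → (Fin N → S) := fun i => if p i = 0 then uu else if p i = 1 then vv
    else B i with hbase
  have hterm : (fun i => g i (p i)) = fun i => coef i • base i := by
    funext i
    simp only [hg, hcoef, hbase]
    split_ifs <;> rfl
  rw [hterm, f.toMultilinearMap.map_smul_univ coef base]
  by_cases h0 : ∃ i i', i ≠ i' ∧ p i = 0 ∧ p i' = 0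
  · obtain ⟨i, i', hne, hi, hi'⟩ := h0
    have hbb : base i = base i' := by simp [hbase, hi, hi']
    rw [show f.toMultilinearMap base = f base from rfl,
      f.map_eq_zero_of_eq base hbb hne]
    simp
  by_cases h1 : ∃ i i', i ≠ i' ∧ p i = 1 ∧ p i' = 1
  · obtain ⟨i, i', hne, hi, hi'⟩ := h1
    have hbb : base i = base i' := by
      simp only [hbase, hi, hi']
      norm_num
    rw [show f.toMultilinearMap base = f base from rfl,
      f.map_eq_zero_of_eq base hbb hne]
    simp
  · -- counting
    set T : Finset (Fin N) := univ.filter (fun i => p i = 2) with hT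
    have hcompl : Tᶜ ⊆ univ.filter (fun i => p i = 0) ∪ univ.filter (fun i => p i = 1) := by
      intro i hi
      simp only [hT, Finset.mem_compl, Finset.mem_filter, mem_univ, true_and] at hi
      have h3 : p i = 0 ∨ p i = 1 ∨ p i = 2 := by
        have : ∀ q : Fin 3, q = 0 ∨ q = 1 ∨ q = 2 := by decide
        exact this (p i)
      simp only [Finset.mem_union, Finset.mem_filter, mem_univ, true_and]
      tauto
    have hc0 : (univ.filter (fun i => p i = 0)).card ≤ 1 := by
      by_contra hc
      obtain ⟨a, ha, b, hb, hab⟩ := Finset.one_lt_card.mp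
        (show 1 < (univ.filter (fun i => p i = 0)).card by omega)
      simp only [Finset.mem_filter] at ha hb
      exact h0 ⟨a, b, hab, ha.2, hb.2⟩
    have hc1 : (univ.filter (fun i => p i = 1)).card ≤ 1 := by
      by_contra hc
      obtain ⟨a, ha, b, hb, hab⟩ := Finset.one_lt_card.mp
        (show 1 < (univ.filter (fun i => p i = 1)).card by omega)
      simp only [Finset.mem_filter] at ha hb
      exact h1 ⟨a, b, hab, ha.2, hb.2⟩
    have hcard : N - 2 ≤ T.card := by
      have h4 := Finset.card_le_card hcompl
      have h5 := Finset.card_union_le (univ.filter (fun i => p i = 0))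
        (univ.filter (fun i => p i = 1))
      have h6 : Tᶜ.card = N - T.card := by
        rw [Finset.card_compl, Fintype.card_fin]
      omega
    have hsplit : (∏ i, coef i) = (∏ i ∈ T, coef i) * ∏ i ∈ Tᶜ, coef i :=
      (Finset.prod_mul_prod_compl T coef).symm
    have hTval : (∏ i ∈ T, coef i) = al ^ T.card := by
      rw [Finset.prod_congr rfl (fun i hi => ?_), Finset.prod_const]
      simp only [hT, Finset.mem_filter] at hi
      simp [hcoef, hi.2]
    rw [smul_eq_mul, hsplit, hTval]
    exact Dvd.dvd.mul_right (Dvd.dvd.mul_right (pow_dvd_pow al hcard) _) _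

lemma kbound (n k : ℕ) (hn : 2 ≤ n) (hk : 2 ≤ k)
    (g2 : ((n:ℤ) - 1) * k < 2 * ((n:ℤ) + 1)) :
    k ≤ 5 ∧ (3 ≤ n → k ≤ 3) ∧ (5 ≤ n → k ≤ 2) := by
  have hnZ : (2:ℤ) ≤ (n:ℤ) := by exact_mod_cast hn
  refine ⟨?_, ?_, ?_⟩
  · by_contra hc
    have h6 : (6:ℤ) ≤ (k:ℤ) := by exact_mod_cast (show 6 ≤ k by omega)
    nlinarith [g2, hnZ, h6, mul_nonneg (by linarith : (0:ℤ) ≤ (n:ℤ)-1)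
      (by linarith : (0:ℤ) ≤ (k:ℤ)-6)]
  · intro h3n
    by_contra hc
    have h4 : (4:ℤ) ≤ (k:ℤ) := by exact_mod_cast (show 4 ≤ k by omega)
    have h3Z : (3:ℤ) ≤ (n:ℤ) := by exact_mod_cast h3n
    nlinarith [g2, h3Z, h4, mul_nonneg (by linarith : (0:ℤ) ≤ (n:ℤ)-1)
      (by linarith : (0:ℤ) ≤ (k:ℤ)-4)]
  · intro h5n
    by_contra hc
    have h3 : (3:ℤ) ≤ (k:ℤ) := by exact_mod_cast (show 3 ≤ k by omega)
    have h5Z : (5:ℤ) ≤ (n:ℤ) := by exact_mod_cast h5n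
    nlinarith [g2, h5Z, h3, mul_nonneg (by linarith : (0:ℤ) ≤ (n:ℤ)-1)
      (by linarith : (0:ℤ) ≤ (k:ℤ)-3)]

end PencilAux

end Helpers

/-- Reduction step: if the Jacobian determinant D of the coefficients of
ω = (Q/Q̃)(F dG - G dF) is nonzero, then (n-1)·k·d ≤ (n+1)(2d-2) - 2(kd - deg Q),
whence (n-1)k < 2(n+1); in particular k ≤ 5 for n ≥ 2, k ≤ 3 for n ≥ 3 and
k ≤ 2 for n ≥ 5. -/
theorem reduction_nonvanishing_jacobian
    (n d k u : ℕ) (hn : 2 ≤ n) (hd : 1 ≤ d) (hk : 2 ≤ k)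
    (F G : MvPolynomial (Fin (n + 1)) ℂ)
    (hF : F.IsHomogeneous d) (hG : G.IsHomogeneous d)
    (hFcr : CompletelyReducible n F) (hGcr : CompletelyReducible n G)
    (hcop : RelPrime n F G)
    -- the k pairwise distinct completely reducible members P_1 = F, P_2 = G, P_3, ..., P_k
    (c : Fin k → ℂ × ℂ)
    (hprop : ∀ i j, i ≠ j → (c i).1 * (c j).2 ≠ (c i).2 * (c j).1)
    (P : Fin k → MvPolynomial (Fin (n + 1)) ℂ)
    (hP : ∀ i, P i = C (c i).1 * F + C (c i).2 * G)
    (hP0 : P ⟨0, by omega⟩ = F) (hP1 : P ⟨1, by omega⟩ = G)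
    (hPcr : ∀ i, CompletelyReducible n (P i))
    -- Q̃ = P_1 ⋯ P_k = ∏ αᵢ^{mᵢ}, with the αᵢ pairwise non-proportional linear forms,
    -- and Q = ∏ αᵢ is the radical of Q̃ (of degree u)
    (α : Fin u → MvPolynomial (Fin (n + 1)) ℂ)
    (hα : ∀ i, IsLinearForm n (α i))
    (hαprop : ∀ i j, i ≠ j → ∀ t : ℂ, α i ≠ C t * α j)
    (m : Fin u → ℕ) (hm : ∀ i, 1 ≤ m i)
    (hQt : ∏ i, P i = ∏ i, α i ^ m i)
    -- the polynomial coefficients aᵢ of ω = (Q/Q̃)·(F dG - G dF), i.e. aᵢ·(Q̃/Q) = bᵢ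
    (a : Fin (n + 1) → MvPolynomial (Fin (n + 1)) ℂ)
    (ha : ∀ i, a i * ∏ j, α j ^ (m j - 1) = F * pderiv i G - G * pderiv i F)
    -- D ≠ 0
    (hD : (Matrix.of fun i j => pderiv j (a i)).det ≠ 0) :
    ((n : ℤ) - 1) * k * d ≤ (n + 1) * (2 * d - 2) - 2 * (k * d - u) ∧
    ((n : ℤ) - 1) * k < 2 * (n + 1) ∧
    k ≤ 5 ∧ (3 ≤ n → k ≤ 3) ∧ (5 ≤ n → k ≤ 2) := by
  classical
  set w : MvPolynomial (Fin (n + 1)) ℂ := ∏ j, α j ^ (m j - 1) with hw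
  set M0 : Matrix (Fin (n+1)) (Fin (n+1)) (MvPolynomial (Fin (n + 1)) ℂ) :=
    Matrix.of fun i j => pderiv j (a i) with hM0
  set Dpoly := M0.det with hDp
  have hDne : Dpoly ≠ 0 := hD
  -- basic facts
  have hαne : ∀ j, α j ≠ 0 := fun j => (hα j).1
  have hαhom : ∀ j, (α j).IsHomogeneous 1 := fun j => (hα j).2
  have hprime : ∀ j, Prime (α j) := fun j => PencilAux.prime_of_linear (hαne j) (hαhom j)
  have hnd : ∀ i j, i ≠ j → ¬ α i ∣ α j := by
    intro i j hij hdvd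
    obtain ⟨t, ht⟩ := PencilAux.linear_dvd_linear (hαne i) (hαhom i) (hαne j) (hαhom j) hdvd
    exact hαprop j i (Ne.symm hij) t ht
  have hQtne : (∏ j, α j ^ m j) ≠ 0 :=
    Finset.prod_ne_zero_iff.mpr (fun j _ => pow_ne_zero _ (hαne j))
  have hPprodne : (∏ i, P i) ≠ 0 := by rw [hQt]; exact hQtne
  have hPne : ∀ i, P i ≠ 0 := by
    intro i h0
    exact hPprodne (Finset.prod_eq_zero (Finset.mem_univ i) h0)
  have hFne : F ≠ 0 := by rw [← hP0]; exact hPne _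
  have hGne : G ≠ 0 := by rw [← hP1]; exact hPne _
  have hPhom : ∀ i, (P i).IsHomogeneous d := by
    intro i; rw [hP i]
    exact (hF.C_mul _).add (hG.C_mul _)
  have hwne : w ≠ 0 := by
    rw [hw]; exact Finset.prod_ne_zero_iff.mpr (fun j _ => pow_ne_zero _ (hαne j))
  have hwhom : w.IsHomogeneous (∑ j, (m j - 1)) := by
    rw [hw]
    exact MvPolynomial.IsHomogeneous.prod Finset.univ _ _
      (fun j _ => by simpa using (hαhom j).pow (m j - 1))
  -- a_i nonzero
  have hane : ∀ i, a i ≠ 0 := by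
    intro i h0
    apply hDne
    rw [hDp]
    apply Matrix.det_eq_zero_of_row_eq_zero i
    intro j
    simp [hM0, h0]
  -- a_i homogeneous
  have hsd : ∀ i, (a i).IsHomogeneous ((a i).totalDegree) ∧
      (a i).totalDegree + (∑ j, (m j - 1)) = 2*d - 1 := by
    intro i
    have hbhom : (a i * w).IsHomogeneous (2*d - 1) := by
      rw [ha i]
      have h1 : (F * pderiv i G).IsHomogeneous (d + (d-1)) :=
        hF.mul (PencilAux.isHomog_pderiv hG i)
      have h2 : (G * pderiv i F).IsHomogeneous (d + (d-1)) :=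
        hG.mul (PencilAux.isHomog_pderiv hF i)
      have hdd : d + (d - 1) = 2*d - 1 := by omega
      rw [← hdd]
      exact h1.sub h2
    obtain ⟨h1, h2, h3⟩ := PencilAux.homog_mul_split (hane i) hwne hbhom
    rw [hwhom.totalDegree hwne] at h3
    exact ⟨h1, h3⟩
  set e := (a 0).totalDegree with he
  have haedeg : ∀ i, (a i).totalDegree = e := by
    intro i
    have h1 := (hsd i).2
    have h2 := (hsd 0).2
    omega
  have hahom : ∀ i, (a i).IsHomogeneous e := fun i => (haedeg i) ▸ (hsd i).1
  have hes : e + (∑ j, (m j - 1)) = 2*d - 1 := (hsd 0).2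
  have he1 : 1 ≤ e := by
    by_contra h0
    have he0 : e = 0 := by omega
    have hC := PencilAux.eq_C_of_isHomog_zero (he0 ▸ hahom 0)
    apply hDne
    rw [hDp]
    apply Matrix.det_eq_zero_of_row_eq_zero 0
    intro j
    simp only [hM0, Matrix.of_apply]
    rw [hC, pderiv_C]
  -- degrees of the pencil product
  have hkd : k * d = ∑ j, m j := by
    have hQhomL : (∏ i, P i).IsHomogeneous (k*d) := by
      have := MvPolynomial.IsHomogeneous.prod Finset.univ P (fun _ => d) (fun i _ => hPhom i)
      simpa [Finset.sum_const, Finset.card_univ, mul_comm] using this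
    have hQhomR : (∏ j, α j ^ m j).IsHomogeneous (∑ j, m j) :=
      MvPolynomial.IsHomogeneous.prod Finset.univ _ m
        (fun j _ => by simpa using (hαhom j).pow (m j))
    exact MvPolynomial.IsHomogeneous.inj_right (hQt ▸ hQhomL) hQhomR hQtne
  have hsu : (∑ j, (m j - 1)) + u = k * d := by
    rw [hkd]
    have hstep : ∀ j : Fin u, (m j - 1) + 1 = m j := fun j => by have := hm j; omega
    calc (∑ j, (m j - 1)) + u = ∑ j : Fin u, ((m j - 1) + 1) := by
          rw [Finset.sum_add_distrib]; simp
      _ = ∑ j, m j := Finset.sum_congr rfl (fun j _ => hstep j)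
  -- ================= KEY DIVISIBILITY =================
  have key : ∀ t : Fin u, α t ^ (n - 1) ∣ Dpoly := by
    intro t
    have hβne := hαne t
    have hβprime := hprime t
    have hβdvd : α t ∣ ∏ i, P i := by
      rw [hQt]
      exact dvd_trans (dvd_pow_self (α t) (by have := hm t; omega))
        (Finset.dvd_prod_of_mem _ (Finset.mem_univ t))
    obtain ⟨s0, -, hs0⟩ := hβprime.exists_mem_finset_dvd hβdvd
    -- β does not divide other members
    have hnotP : ∀ i, i ≠ s0 → ¬ α t ∣ P i := by
      intro i hi hdvd
      have hΔ1 : (c i).1 * (c s0).2 - (c i).2 * (c s0).1 ≠ 0 :=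
        sub_ne_zero_of_ne (hprop i s0 hi)
      have hΔ2 : (c s0).1 * (c i).2 - (c s0).2 * (c i).1 ≠ 0 :=
        sub_ne_zero_of_ne (hprop s0 i (Ne.symm hi))
      have hidF : C ((c s0).2) * P i - C ((c i).2) * P s0
          = C ((c i).1 * (c s0).2 - (c i).2 * (c s0).1) * F := by
        rw [hP i, hP s0, map_sub, map_mul, map_mul]
        ring
      have hidG : C ((c s0).1) * P i - C ((c i).1) * P s0
          = C ((c s0).1 * (c i).2 - (c s0).2 * (c i).1) * G := by
        rw [hP i, hP s0, map_sub, map_mul, map_mul]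
        ring
      have hdF : α t ∣ C ((c i).1 * (c s0).2 - (c i).2 * (c s0).1) * F := by
        rw [← hidF]; exact dvd_sub (hdvd.mul_left _) (hs0.mul_left _)
      have hdG : α t ∣ C ((c s0).1 * (c i).2 - (c s0).2 * (c i).1) * G := by
        rw [← hidG]; exact dvd_sub (hdvd.mul_left _) (hs0.mul_left _)
      have hdF' : α t ∣ F := by
        have hFexp : F = C ((c i).1 * (c s0).2 - (c i).2 * (c s0).1)⁻¹ *
            (C ((c i).1 * (c s0).2 - (c i).2 * (c s0).1) * F) := by
          rw [← mul_assoc, ← map_mul, inv_mul_cancel₀ hΔ1, map_one, one_mul]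
        rw [hFexp]; exact hdF.mul_left _
      have hdG' : α t ∣ G := by
        have hGexp : G = C ((c s0).1 * (c i).2 - (c s0).2 * (c i).1)⁻¹ *
            (C ((c s0).1 * (c i).2 - (c s0).2 * (c i).1) * G) := by
          rw [← mul_assoc, ← map_mul, inv_mul_cancel₀ hΔ2, map_one, one_mul]
        rw [hGexp]; exact hdG.mul_left _
      exact PencilAux.not_isUnit_of_linear hβne (hαhom t) (hcop _ hdF' hdG')
    -- a second member
    obtain ⟨s1, hs10⟩ : ∃ s1 : Fin k, s1 ≠ s0 :=
      Fintype.exists_ne_of_one_lt_card (by rw [Fintype.card_fin]; omega) s0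
    -- exact power of β in P s0
    have hsplit2 : (∏ j, α j ^ m j) = α t ^ m t * ∏ j ∈ Finset.univ.erase t, α j ^ m j :=
      (Finset.mul_prod_erase Finset.univ _ (Finset.mem_univ t)).symm
    have hsplitP : (∏ i, P i) = P s0 * ∏ i ∈ Finset.univ.erase s0, P i :=
      (Finset.mul_prod_erase Finset.univ _ (Finset.mem_univ s0)).symm
    have hβZ : ¬ α t ∣ ∏ i ∈ Finset.univ.erase s0, P i := by
      intro hdvd
      obtain ⟨i, hi, hdv⟩ := (Prime.dvd_finset_prod_iff hβprime _).mp hdvd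
      exact hnotP i (Finset.ne_of_mem_erase hi) hdv
    have hβw2 : ¬ α t ∣ ∏ j ∈ Finset.univ.erase t, α j ^ m j := by
      intro hdvd
      obtain ⟨j, hj, hdv⟩ := (Prime.dvd_finset_prod_iff hβprime _).mp hdvd
      exact hnd t j (Ne.symm (Finset.ne_of_mem_erase hj)) (hβprime.dvd_of_dvd_pow hdv)
    have hPZ : P s0 * (∏ i ∈ Finset.univ.erase s0, P i)
        = α t ^ m t * ∏ j ∈ Finset.univ.erase t, α j ^ m j := by
      rw [← hsplitP, hQt, hsplit2]
    obtain ⟨H, hH⟩ : ∃ H, P s0 = α t ^ m t * H := by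
      have h1 : α t ^ m t ∣ P s0 * ∏ i ∈ Finset.univ.erase s0, P i := by
        rw [hPZ]; exact Dvd.intro _ rfl
      exact hβprime.pow_dvd_of_dvd_mul_right (m t) hβZ h1
    have hβH : ¬ α t ∣ H := by
      intro hdvd
      have hcancel : H * (∏ i ∈ Finset.univ.erase s0, P i)
          = ∏ j ∈ Finset.univ.erase t, α j ^ m j := by
        apply mul_left_cancel₀ (pow_ne_zero (m t) hβne)
        rw [← mul_assoc, ← hH]
        exact hPZ
      exact hβw2 (hcancel ▸ hdvd.mul_right _)
    -- coefficients of the linear form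
    have hκ : ∀ i : Fin (n+1), pderiv i (α t) = C (coeff 0 (pderiv i (α t))) := by
      intro i
      apply PencilAux.eq_C_of_isHomog_zero
      simpa using PencilAux.isHomog_pderiv (hαhom t) i
    -- split w
    set w' : MvPolynomial (Fin (n + 1)) ℂ := ∏ j ∈ Finset.univ.erase t, α j ^ (m j - 1)
      with hw'
    have hwsplit : w = α t ^ (m t - 1) * w' := by
      rw [hw, hw']
      exact (Finset.mul_prod_erase Finset.univ _ (Finset.mem_univ t)).symm
    have hβw' : ¬ α t ∣ w' := by
      intro hdvd
      rw [hw'] at hdvd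
      obtain ⟨j, hj, hdv⟩ := (Prime.dvd_finset_prod_iff hβprime _).mp hdvd
      exact hnd t j (Ne.symm (Finset.ne_of_mem_erase hj)) (hβprime.dvd_of_dvd_pow hdv)
    -- pencil determinant
    have hΔ : (c s0).1 * (c s1).2 - (c s0).2 * (c s1).1 ≠ 0 :=
      sub_ne_zero_of_ne (hprop s0 s1 (Ne.symm hs10))
    set Δ : ℂ := (c s0).1 * (c s1).2 - (c s0).2 * (c s1).1 with hΔdef
    set q : MvPolynomial (Fin (n+1)) ℂ := -(C (m t : ℂ) * P s1 * H) with hq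
    set r : Fin (n+1) → MvPolynomial (Fin (n+1)) ℂ :=
      fun i => H * pderiv i (P s1) - P s1 * pderiv i H with hr
    have hmt : α t ^ m t = α t ^ (m t - 1) * α t := by
      rw [← pow_succ]
      congr 1
      have := hm t
      omega
    -- the fundamental relation E1
    have E1 : ∀ i, C Δ * a i * w' = q * C (coeff 0 (pderiv i (α t))) + α t * r i := by
      intro i
      apply mul_left_cancel₀ (pow_ne_zero (m t - 1) hβne)
      have E0 : C Δ * (F * pderiv i G - G * pderiv i F)
          = P s0 * pderiv i (P s1) - P s1 * pderiv i (P s0) := by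
        rw [hP s0, hP s1, hΔdef, map_sub, map_mul, map_mul]
        simp only [map_add, pderiv_C_mul]
        ring
      calc α t ^ (m t - 1) * (C Δ * a i * w')
          = C Δ * (a i * w) := by rw [hwsplit]; ring
        _ = C Δ * (F * pderiv i G - G * pderiv i F) := by rw [ha i]
        _ = P s0 * pderiv i (P s1) - P s1 * pderiv i (P s0) := E0
        _ = α t ^ (m t - 1) * (q * C (coeff 0 (pderiv i (α t))) + α t * r i) := by
            conv_lhs => rw [hH, pderiv_mul, Derivation.leibniz_pow, hκ i]
            rw [hq]
            simp only [hr, smul_eq_mul, nsmul_eq_mul]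
            rw [← map_natCast (C : ℂ →+* MvPolynomial (Fin (n+1)) ℂ) (m t), hmt]
            ring
    -- differentiate E1
    have E2 : ∀ i j, (C Δ * w' ^ 2) * pderiv j (a i)
        = C (coeff 0 (pderiv i (α t))) * (w' * pderiv j q - q * pderiv j w')
          + r i * (w' * pderiv j (α t))
          + α t * (w' * pderiv j (r i) - r i * pderiv j w') := by
      intro i j
      have base := congrArg (pderiv j) (E1 i)
      simp only [map_add, pderiv_mul, pderiv_C, mul_zero, add_zero, zero_mul, zero_add,
        map_neg, map_mul] at base
      linear_combination w' * base - pderiv j w' * E1 i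
    -- the auxiliary matrix
    set K : Matrix (Fin (n+1)) (Fin (n+1)) (MvPolynomial (Fin (n + 1)) ℂ) :=
      Matrix.of fun i j => C (coeff 0 (pderiv i (α t))) * (w' * pderiv j q - q * pderiv j w')
          + r i * (w' * pderiv j (α t))
          + α t * (w' * pderiv j (r i) - r i * pderiv j w') with hK
    have hdvd0 : α t ^ (n + 1 - 2) ∣ K.det :=
      PencilAux.det_dvd_aux (α t) (fun i => C (coeff 0 (pderiv i (α t)))) r
        (fun j => w' * pderiv j q - q * pderiv j w') (fun j => w' * pderiv j (α t))
        (Matrix.of fun i j => w' * pderiv j (r i) - r i * pderiv j w')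
    have hKdet : K.det = (C Δ * w' ^ 2) ^ (n + 1) * Dpoly := by
      have hKM : K = (C Δ * w' ^ 2) • M0 := by
        apply Matrix.ext
        intro i j
        simp only [hK, Matrix.of_apply, Matrix.smul_apply, smul_eq_mul, hM0]
        exact (E2 i j).symm
      rw [hKM, Matrix.det_smul, hDp]
      norm_num
    have hfinal : α t ^ (n - 1) ∣ (C Δ * w' ^ 2) ^ (n + 1) * Dpoly := by
      rw [← hKdet]
      have h2 : n + 1 - 2 = n - 1 := by omega
      rw [← h2]
      exact hdvd0
    apply hβprime.pow_dvd_of_dvd_mul_left (n - 1) ?_ hfinal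
    intro hdvd
    have h1 : α t ∣ C Δ * w' ^ 2 := hβprime.dvd_of_dvd_pow hdvd
    rcases hβprime.2.2 _ _ h1 with h2 | h2
    · exact PencilAux.not_isUnit_of_linear hβne (hαhom t)
        (isUnit_of_dvd_unit h2 ((isUnit_iff_ne_zero.mpr hΔ).map C))
    · exact hβw' (hβprime.dvd_of_dvd_pow h2)
  -- ================= DEGREE COUNT =================
  have hQdvd : (∏ t, α t ^ (n-1)) ∣ Dpoly :=
    PencilAux.prod_pow_dvd α hprime hnd (n-1) Dpoly key
  have hDhom : Dpoly.IsHomogeneous ((n+1) * (e-1)) := by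
    rw [hDp, Matrix.det_apply]
    apply MvPolynomial.IsHomogeneous.sum
    intro σ _
    have hprodh : (∏ i, M0 (σ i) i).IsHomogeneous ((n+1)*(e-1)) := by
      have := MvPolynomial.IsHomogeneous.prod Finset.univ (fun i => M0 (σ i) i)
        (fun _ => e-1) (fun i _ => by
          show (pderiv i (a (σ i))).IsHomogeneous (e-1)
          exact PencilAux.isHomog_pderiv (hahom (σ i)) i)
      simpa [Finset.sum_const, Finset.card_univ, mul_comm] using this
    rcases Int.units_eq_one_or (Equiv.Perm.sign σ) with hsgn | hsgn
    · rw [hsgn]; simpa using hprodh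
    · rw [hsgn]; simpa using hprodh.neg
  obtain ⟨E, hE⟩ := hQdvd
  have hEne : E ≠ 0 := by rintro rfl; rw [mul_zero] at hE; exact hDne hE
  have hQpowne : (∏ t, α t ^ (n-1)) ≠ 0 :=
    Finset.prod_ne_zero_iff.mpr fun j _ => pow_ne_zero _ (hαne j)
  have hQpowhom : (∏ t : Fin u, α t ^ (n-1)).IsHomogeneous (u * (n-1)) := by
    have := MvPolynomial.IsHomogeneous.prod Finset.univ (fun t => α t ^ (n-1))
      (fun _ => n-1) (fun t _ => by simpa using (hαhom t).pow (n-1))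
    simpa [Finset.sum_const, Finset.card_univ, mul_comm] using this
  obtain ⟨-, -, h3⟩ := PencilAux.homog_mul_split hQpowne hEne (hE ▸ hDhom)
  rw [hQpowhom.totalDegree hQpowne] at h3
  have hkey : u * (n-1) ≤ (n+1) * (e-1) := by omega
  -- ================= ARITHMETIC =================
  have hnZ : (2:ℤ) ≤ (n:ℤ) := by exact_mod_cast hn
  have hdZ : (1:ℤ) ≤ (d:ℤ) := by exact_mod_cast hd
  have hkZ : (2:ℤ) ≤ (k:ℤ) := by exact_mod_cast hk
  have hkeyZ : (u:ℤ) * ((n:ℤ)-1) ≤ ((n:ℤ)+1) * ((e:ℤ)-1) := by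
    zify [show 1 ≤ n by omega, he1] at hkey
    exact hkey
  have hsuZ : ((∑ j, (m j - 1) : ℕ) : ℤ) + (u:ℤ) = (k:ℤ) * (d:ℤ) := by exact_mod_cast hsu
  have hesZ : (e:ℤ) + ((∑ j, (m j - 1) : ℕ) : ℤ) + 1 = 2*(d:ℤ) := by
    have hes' : e + (∑ j, (m j - 1)) + 1 = 2*d := by omega
    exact_mod_cast hes'
  have hsZ : (0:ℤ) ≤ ((∑ j, (m j - 1) : ℕ) : ℤ) := Int.ofNat_nonneg _
  have g1 : ((n:ℤ) - 1) * k * d ≤ ((n:ℤ) + 1) * (2 * d - 2) - 2 * ((k:ℤ) * d - u) := by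
    have hid : ((n:ℤ)+1) * (2*(d:ℤ)-2) - 2*((k:ℤ)*d - u) - ((n:ℤ)-1)*k*d
        = ((n:ℤ)+1)*((e:ℤ)-1) - (u:ℤ)*((n:ℤ)-1) := by
      linear_combination (-((n:ℤ)+1)) * hesZ + ((n:ℤ)+1) * hsuZ
    linarith [hkeyZ, hid]
  have g2 : ((n:ℤ) - 1) * k < 2 * ((n:ℤ) + 1) := by
    have g2' : ((n:ℤ)-1)*k*d < 2*((n:ℤ)+1)*d := by linarith [g1, hsuZ, hsZ, hnZ]
    exact lt_of_mul_lt_mul_right g2' (by linarith)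
  obtain ⟨g3, g4, g5⟩ := PencilAux.kbound n k hn hk g2
  exact ⟨g1, g2, g3, g4, g5⟩
end
end

section
/- Let F, G be coprime completely reducible homogeneous polynomials of the same degree d ≥ 1 in R = MvPolynomial (Fin (n+1)) ℂ, and let P_1 = F, P_2 = G, P_3, …, P_k be pairwise distinct completely reducible members of the pencil 𝒫 with product Q̃ and radical Q. Then Q̃/Q divides the coefficient b_i = F·∂_iG − G·∂_iF of the 1-form ω₀ = F dG − G dF for every 0 ≤ i ≤ n; equivalently, for every linear form α occurring with multiplicity m in Q̃, the power α^{m−1} divides each b_i, so that ω = (Q/Q̃)ω₀ is a polynomial 1-form. -/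
open MvPolynomial

noncomputable section

open Function

/-! If `α ^ m` divides a member `P` of the pencil, then `α ^ (m - 1)` divides both `P` and
every `∂ᵢ P`. For any other member `P'`, `P ∂ᵢ P' - P' ∂ᵢ P` is a nonzero multiple of
`F ∂ᵢ G - G ∂ᵢ F`, so `α ^ (m - 1)` divides the latter. Distinct members are pairwise
coprime, so the prime `α` divides `Q̃ = ∏ P` with full multiplicity `m` inside a single
member; and non-proportional linear forms are coprime, so these powers multiply. -/

section LinearForms

variable {σ K : Type*} [Field K]

theorem MvPolynomial.irreducible_of_totalDegree_eq_one_of_field {p : MvPolynomial σ K}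
    (hp : p.totalDegree = 1) : Irreducible p := by
  refine irreducible_of_totalDegree_eq_one hp fun x hx => isUnit_iff_ne_zero.mpr ?_
  rintro rfl
  have hp0 : p = 0 := by ext i; simpa using hx i
  simp [hp0] at hp

theorem MvPolynomial.exists_eq_C_mul_of_dvd_of_totalDegree_eq {p q : MvPolynomial σ K}
    (hq : q ≠ 0) (hpq : p ∣ q) (hdeg : q.totalDegree = p.totalDegree) :
    ∃ t : K, q = C t * p := by
  obtain ⟨v, rfl⟩ := hpq
  obtain ⟨hp, hv⟩ := mul_ne_zero_iff.mp hq
  rw [totalDegree_mul_of_isDomain hp hv] at hdeg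
  exact ⟨v.coeff 0, by rw [mul_comm, ← totalDegree_eq_zero_iff_eq_C.mp (by omega)]⟩

end LinearForms

namespace IsLinearForm

variable {n : ℕ} {α β : MvPolynomial (Fin (n + 1)) ℂ}

theorem totalDegree_eq (hα : IsLinearForm n α) : α.totalDegree = 1 :=
  hα.2.totalDegree hα.1

theorem irreducible (hα : IsLinearForm n α) : Irreducible α :=
  irreducible_of_totalDegree_eq_one_of_field hα.totalDegree_eq

theorem prime (hα : IsLinearForm n α) : Prime α :=
  hα.irreducible.prime

theorem isRelPrime (hα : IsLinearForm n α) (hβ : IsLinearForm n β)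
    (hαβ : ∀ t : ℂ, β ≠ C t * α) : IsRelPrime α β := by
  refine hα.irreducible.isRelPrime_iff_not_dvd.mpr fun hdvd => ?_
  obtain ⟨t, ht⟩ := exists_eq_C_mul_of_dvd_of_totalDegree_eq hβ.1 hdvd
    (hβ.totalDegree_eq.trans hα.totalDegree_eq.symm)
  exact hαβ t ht

end IsLinearForm

theorem Prime.exists_pow_dvd_of_pow_dvd_prod {M ι : Type*} [CommMonoidWithZero M]
    [IsCancelMulZero M] [Fintype ι] [Nonempty ι] {f : ι → M} (hf : Pairwise (IsRelPrime on f))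
    {p : M} (hp : Prime p) {m : ℕ} (hdvd : p ^ m ∣ ∏ i, f i) : ∃ j, p ^ m ∣ f j := by
  classical
  rcases Nat.eq_zero_or_pos m with rfl | hm
  · exact ⟨Classical.arbitrary ι, by simp⟩
  obtain ⟨j, -, hj⟩ := hp.exists_mem_finset_dvd ((dvd_pow_self p hm.ne').trans hdvd)
  have hrest : ¬ p ∣ ∏ i ∈ Finset.univ.erase j, f i := fun hrest => by
    obtain ⟨l, hl, hl'⟩ := hp.exists_mem_finset_dvd hrest
    exact hp.not_isUnit (hf (Finset.ne_of_mem_erase hl).symm hj hl')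
  refine ⟨j, hp.pow_dvd_of_dvd_mul_right m hrest ?_⟩
  rwa [Finset.mul_prod_erase _ _ (Finset.mem_univ j)]

section Pencil

variable {K A : Type*} [Field K] [CommRing A] [Algebra K A]

theorem dvd_of_dvd_smul_of_ne_zero {x y : A} {c : K} (hc : c ≠ 0) (h : x ∣ c • y) : x ∣ y := by
  simpa [smul_smul, inv_mul_cancel₀ hc] using dvd_smul_of_dvd c⁻¹ h

theorem IsRelPrime.smul_add_smul {F G : A} (hFG : IsRelPrime F G) {a b a' b' : K}
    (hdet : a * b' ≠ b * a') : IsRelPrime (a • F + b • G) (a' • F + b' • G) := by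
  have hdet' : a * b' - b * a' ≠ 0 := sub_ne_zero.mpr hdet
  intro p hP hP'
  refine hFG (dvd_of_dvd_smul_of_ne_zero hdet' ?_) (dvd_of_dvd_smul_of_ne_zero hdet' ?_)
  · have : (a * b' - b * a') • F = b' • (a • F + b • G) - b • (a' • F + b' • G) := by module
    rw [this]
    exact dvd_sub (dvd_smul_of_dvd _ hP) (dvd_smul_of_dvd _ hP')
  · have : (a * b' - b * a') • G = a • (a' • F + b' • G) - a' • (a • F + b • G) := by module
    rw [this]
    exact dvd_sub (dvd_smul_of_dvd _ hP') (dvd_smul_of_dvd _ hP)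

namespace Derivation

variable (D : Derivation K A A)

theorem pow_pred_dvd_of_pow_dvd {p x : A} {m : ℕ} (h : p ^ m ∣ x) : p ^ (m - 1) ∣ D x := by
  obtain ⟨y, rfl⟩ := h
  rw [D.leibniz, D.leibniz_pow, smul_eq_mul, smul_eq_mul, smul_eq_mul]
  exact dvd_add ((pow_dvd_pow p (Nat.sub_le m 1)).mul_right _)
    (dvd_mul_of_dvd_right (dvd_smul_of_dvd _ (dvd_mul_right _ _)) _)

theorem smul_add_smul_wronskian (F G : A) (a b a' b' : K) :
    (a • F + b • G) * D (a' • F + b' • G) - (a' • F + b' • G) * D (a • F + b • G) =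
      (a * b' - b * a') • (F * D G - G * D F) := by
  simp only [map_add, map_smul]
  simp only [Algebra.smul_def, map_sub, map_mul]
  ring

theorem pow_pred_dvd_wronskian_of_pow_dvd {F G p : A} {m : ℕ} {a b a' b' : K}
    (hdet : a * b' ≠ b * a') (h : p ^ m ∣ a • F + b • G) :
    p ^ (m - 1) ∣ F * D G - G * D F := by
  refine dvd_of_dvd_smul_of_ne_zero (sub_ne_zero.mpr hdet) ?_
  rw [← D.smul_add_smul_wronskian]
  exact dvd_sub (((pow_dvd_pow p (Nat.sub_le m 1)).trans h).mul_right _)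
    ((D.pow_pred_dvd_of_pow_dvd h).mul_left _)

end Derivation

end Pencil

/-- Q̃/Q divides each coefficient bᵢ = F·∂ᵢG - G·∂ᵢF of ω₀ = F dG - G dF; equivalently,
for every linear form α occurring with multiplicity m in Q̃, the power α^{m-1} divides
each bᵢ, so ω = (Q/Q̃)ω₀ is a polynomial 1-form. -/
theorem radical_quotient_divides_coefficients
    (n k u : ℕ) (hk : 2 ≤ k)
    (F G : MvPolynomial (Fin (n + 1)) ℂ)
    (hcop : RelPrime n F G)
    (c : Fin k → ℂ × ℂ)
    (hprop : ∀ i j, i ≠ j → (c i).1 * (c j).2 ≠ (c i).2 * (c j).1)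
    (P : Fin k → MvPolynomial (Fin (n + 1)) ℂ)
    (hP : ∀ i, P i = C (c i).1 * F + C (c i).2 * G)
    (α : Fin u → MvPolynomial (Fin (n + 1)) ℂ)
    (hα : ∀ i, IsLinearForm n (α i))
    (hαprop : ∀ i j, i ≠ j → ∀ t : ℂ, α i ≠ C t * α j)
    (m : Fin u → ℕ)
    (hQt : ∏ i, P i = ∏ i, α i ^ m i) :
    (∀ i, (∏ j, α j ^ (m j - 1)) ∣ (F * pderiv i G - G * pderiv i F)) ∧
    (∀ t : Fin u, ∀ i, α t ^ (m t - 1) ∣ (F * pderiv i G - G * pderiv i F)) := by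
  have : Nontrivial (Fin k) := Fin.nontrivial_iff_two_le.mpr hk
  have hpencil : ∀ i, P i = (c i).1 • F + (c i).2 • G := by simpa only [C_mul'] using hP
  have hFG : IsRelPrime F G := fun p => hcop p
  have hPcop : Pairwise (IsRelPrime on P) := fun i j hij => by
    rw [onFun, hpencil i, hpencil j]
    exact hFG.smul_add_smul (hprop i j hij)
  have hαdvd : ∀ t i, α t ^ (m t - 1) ∣ F * pderiv i G - G * pderiv i F := by
    intro t i
    obtain ⟨j, hj⟩ := (hα t).prime.exists_pow_dvd_of_pow_dvd_prod hPcop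
      (hQt ▸ Finset.dvd_prod_of_mem (fun s => α s ^ m s) (Finset.mem_univ t))
    obtain ⟨j', hj'⟩ := exists_ne j
    exact (pderiv i).pow_pred_dvd_wronskian_of_pow_dvd (hprop j j' hj'.symm) (hpencil j ▸ hj)
  refine ⟨fun i => Fintype.prod_dvd_of_isRelPrime (fun s t hst => ?_) fun t => hαdvd t i, hαdvd⟩
  exact ((hα s).isRelPrime (hα t) (hαprop t s hst.symm)).pow
end
end

section
/- Let n ≥ 1, let a_0, …, a_n ∈ MvPolynomial (Fin (n+1)) ℂ, and let α = Σ_{j=0}^n c_j x_j be a nonzero linear form such that α divides c_i·a_j − c_j·a_i for all 0 ≤ i, j ≤ n. Then α^{n−1} divides the Jacobian determinant det(∂_j a_i)_{0≤i,j≤n}. -/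
open MvPolynomial

noncomputable section

/-- An alternating map vanishes on a family with two rows proportional to a common vector. -/
lemma alt_zero_of_two_prop {R : Type*} [CommRing R] {ι : Type*} [DecidableEq ι]
    (f : (ι → R) [⋀^ι]→ₗ[R] R) (m : ι → (ι → R)) {i j : ι} (hij : i ≠ j)
    (x : ι → R) (c d : R) (hi : m i = c • x) (hj : m j = d • x) : f m = 0 := by
  have h1 : m = Function.update m i (c • x) := by rw [← hi, Function.update_eq_self]
  rw [h1, AlternatingMap.map_update_smul]
  have h2 : (Function.update m i x) j = d • x := by
    rw [Function.update_of_ne hij.symm, hj]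
  have h3 : Function.update m i x
      = Function.update (Function.update m i x) j (d • x) := by
    rw [← h2, Function.update_eq_self]
  rw [h3, AlternatingMap.map_update_smul]
  rw [f.map_eq_zero_of_eq _ (i := i) (j := j) ?_ hij, smul_zero, smul_zero]
  rw [Function.update_of_ne hij, Function.update_self, Function.update_self]

/-- If every row indexed by `r` is an `α`-multiple, then `α ^ r.card` divides the value. -/
lemma alt_dvd_pow {R : Type*} [CommRing R] {ι : Type*} [DecidableEq ι] [Fintype ι]
    (f : (ι → R) [⋀^ι]→ₗ[R] R) (m q : ι → (ι → R)) (α : R) (r : Finset ι)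
    (h : ∀ i ∈ r, m i = α • q i) : α ^ r.card ∣ f m := by
  classical
  set Q : ι → (ι → R) := fun i => if i ∈ r then q i else m i with hQ
  have hm : m = r.piecewise (fun i => α • Q i) Q := by
    funext i
    by_cases hi : i ∈ r
    · rw [Finset.piecewise_eq_of_mem _ _ _ hi, hQ]
      simp only [hi, if_true]
      exact h i hi
    · rw [Finset.piecewise_eq_of_notMem _ _ _ hi, hQ]
      simp only [hi, if_false]
  rw [hm]
  have h2 : f (r.piecewise (fun i => α • Q i) Q) = (∏ _i ∈ r, α) • f Q :=
    f.toMultilinearMap.map_piecewise_smul (fun _ => α) Q r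
  rw [h2, Finset.prod_const, smul_eq_mul]
  exact dvd_mul_right _ _

set_option maxHeartbeats 1000000 in
/-- If α = Σⱼ cⱼ xⱼ is a nonzero linear form invariant for the 1-form ω = Σᵢ aᵢ dxᵢ
(i.e. α divides cᵢ·aⱼ - cⱼ·aᵢ for all i, j), then α^{n-1} divides the Jacobian
determinant det(∂ⱼaᵢ). -/
theorem invariant_hyperplane_power_divides_jacobian
    (n : ℕ) (hn : 1 ≤ n)
    (a : Fin (n + 1) → MvPolynomial (Fin (n + 1)) ℂ)
    (cf : Fin (n + 1) → ℂ)
    (α : MvPolynomial (Fin (n + 1)) ℂ)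
    (hα : α = ∑ j, C (cf j) * X j)
    (hα0 : α ≠ 0)
    (hdiv : ∀ i j : Fin (n + 1), α ∣ (C (cf i) * a j - C (cf j) * a i)) :
    α ^ (n - 1) ∣ (Matrix.of fun i j => pderiv j (a i)).det := by
  classical
  -- derivative of α
  have hpα : ∀ j, pderiv j α = C (cf j) := by
    intro j
    rw [hα, map_sum]
    simp [pderiv_X, Pi.single_apply, mul_ite, Finset.sum_ite_eq']
  -- a nonzero coefficient
  obtain ⟨k, hk⟩ : ∃ k, cf k ≠ 0 := by
    by_contra h
    push_neg at h
    exact hα0 (by rw [hα]; simp [h])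
  choose b hb using fun i => hdiv k i
  have hbk : b k = 0 := by
    have h1 := hb k
    have h2 : α * b k = 0 := by linear_combination -h1
    rcases mul_eq_zero.mp h2 with h | h
    · exact absurd h hα0
    · exact h
  have hCk : C (cf k)⁻¹ * C (cf k) = (1 : MvPolynomial (Fin (n+1)) ℂ) := by
    rw [← C_mul, inv_mul_cancel₀ hk, C_1]
  have key : ∀ i, a i = C (cf i / cf k) * a k + C (cf k)⁻¹ * (α * b i) := by
    intro i
    have h1 := hb i
    have hC : (C (cf i / cf k) : MvPolynomial (Fin (n+1)) ℂ) = C (cf k)⁻¹ * C (cf i) := by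
      rw [← C_mul]
      congr 1
      field_simp
    rw [hC]
    calc a i = C (cf k)⁻¹ * C (cf k) * a i := by rw [hCk, one_mul]
    _ = C (cf k)⁻¹ * C (cf i) * a k + C (cf k)⁻¹ * (α * b i) := by
        rw [mul_assoc, mul_assoc, ← mul_add]
        congr 1
        linear_combination h1
  have hrow : ∀ i j, pderiv j (a i) = C (cf i / cf k) * pderiv j (a k)
      + (C (cf k)⁻¹ * b i) * C (cf j) + α * (C (cf k)⁻¹ * pderiv j (b i)) := by
    intro i j
    conv_lhs => rw [key i]
    rw [map_add, pderiv_C_mul, pderiv_C_mul, pderiv_mul, hpα j]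
    ring
  -- set up the alternating map and the row decomposition
  set f := (Matrix.detRowAlternating :
    (Fin (n+1) → MvPolynomial (Fin (n+1)) ℂ) [⋀^Fin (n+1)]→ₗ[MvPolynomial (Fin (n+1)) ℂ]
      MvPolynomial (Fin (n+1)) ℂ) with hf
  set Mk : Fin (n+1) → MvPolynomial (Fin (n+1)) ℂ := fun j => pderiv j (a k) with hMk
  set cvec : Fin (n+1) → MvPolynomial (Fin (n+1)) ℂ := fun j => C (cf j) with hcvec
  set u : Fin (n+1) → Fin (n+1) → MvPolynomial (Fin (n+1)) ℂ :=
    fun i => (C (cf i / cf k) : MvPolynomial (Fin (n+1)) ℂ) • Mk with hu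
  set v : Fin (n+1) → Fin (n+1) → MvPolynomial (Fin (n+1)) ℂ :=
    fun i => ((C (cf k)⁻¹ * b i : MvPolynomial (Fin (n+1)) ℂ)) • cvec with hv
  set q : Fin (n+1) → Fin (n+1) → MvPolynomial (Fin (n+1)) ℂ :=
    fun i j => C (cf k)⁻¹ * pderiv j (b i) with hq
  set w : Fin (n+1) → Fin (n+1) → MvPolynomial (Fin (n+1)) ℂ :=
    fun i => α • q i with hw
  have hvk : v k = 0 := by
    simp only [hv]
    rw [hbk, mul_zero, zero_smul]
  have hwk : w k = 0 := by
    funext j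
    simp [hw, hq, hbk]
  have hdet : (Matrix.of fun i j => pderiv j (a i)).det = f (u + (v + w)) := by
    show Matrix.detRowAlternating _ = Matrix.detRowAlternating _
    congr 1
    funext i j
    simp only [Matrix.of_apply, Pi.add_apply, hu, hv, hw, hq, hMk, hcvec,
      Pi.smul_apply, smul_eq_mul]
    rw [hrow i j]
    ring
  rw [hdet]
  have expand := f.toMultilinearMap.map_add_univ u (v + w)
  rw [AlternatingMap.coe_multilinearMap] at expand
  rw [expand]
  apply Finset.dvd_sum
  intro s _
  by_cases hks : k ∈ s
  · by_cases hs1 : s = {k}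
    · -- the main term: expand again into v and w parts
      rw [hs1, Finset.piecewise_singleton]
      have hupd : Function.update (v + w) k (u k) = Function.update v k (u k) + w := by
        funext i
        by_cases hik : i = k
        · subst hik
          rw [Function.update_self, Pi.add_apply, Function.update_self, hwk, add_zero]
        · simp [Function.update_of_ne hik]
      rw [hupd]
      have expand2 := f.toMultilinearMap.map_add_univ (Function.update v k (u k)) w
      rw [AlternatingMap.coe_multilinearMap] at expand2
      rw [expand2]
      apply Finset.dvd_sum
      intro t _
      by_cases hkt : k ∈ t
      · by_cases htwo : ∃ i ∈ t, ∃ i' ∈ t, i ≠ k ∧ i' ≠ k ∧ i ≠ i'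
        · obtain ⟨i, hit, i', hi't, hik, hi'k, hii'⟩ := htwo
          have h0 : f (t.piecewise (Function.update v k (u k)) w) = 0 := by
            apply alt_zero_of_two_prop f _ hii' cvec (C (cf k)⁻¹ * b i) (C (cf k)⁻¹ * b i')
            · rw [Finset.piecewise_eq_of_mem _ _ _ hit, Function.update_of_ne hik]
            · rw [Finset.piecewise_eq_of_mem _ _ _ hi't, Function.update_of_ne hi'k]
          rw [h0]
          exact dvd_zero _
        · have h1 : (t.erase k).card ≤ 1 := by
            apply Finset.card_le_one.mpr
            intro x hx y hy
            by_contra hxy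
            exact htwo ⟨x, Finset.mem_of_mem_erase hx, y, Finset.mem_of_mem_erase hy,
              Finset.ne_of_mem_erase hx, Finset.ne_of_mem_erase hy, hxy⟩
          have h2 := Finset.card_erase_add_one hkt
          have hsub : n - 1 ≤ tᶜ.card := by
            rw [Finset.card_compl]
            have h3 : Fintype.card (Fin (n+1)) = n + 1 := Fintype.card_fin _
            omega
          have hdvd : α ^ tᶜ.card ∣ f (t.piecewise (Function.update v k (u k)) w) := by
            apply alt_dvd_pow f _ q α tᶜ
            intro i hi
            have hit : i ∉ t := Finset.mem_compl.mp hi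
            rw [Finset.piecewise_eq_of_notMem _ _ _ hit]
          exact dvd_trans (pow_dvd_pow α hsub) hdvd
      · have h0 : f (t.piecewise (Function.update v k (u k)) w) = 0 := by
          apply f.map_coord_zero k
          rw [Finset.piecewise_eq_of_notMem _ _ _ hkt, hwk]
        rw [h0]
        exact dvd_zero _
    · -- two rows proportional to Mk
      obtain ⟨i, his, hik⟩ : ∃ i ∈ s, i ≠ k := by
        by_contra h
        push_neg at h
        exact hs1 (Finset.eq_singleton_iff_unique_mem.mpr ⟨hks, fun x hx => h x hx⟩)
      have h0 : f (s.piecewise u (v + w)) = 0 := by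
        apply alt_zero_of_two_prop f _ hik Mk (C (cf i / cf k)) (C (cf k / cf k))
        · rw [Finset.piecewise_eq_of_mem _ _ _ his]
        · rw [Finset.piecewise_eq_of_mem _ _ _ hks]
      rw [h0]
      exact dvd_zero _
  · -- row k is zero
    have h0 : f (s.piecewise u (v + w)) = 0 := by
      apply f.map_coord_zero k
      rw [Finset.piecewise_eq_of_notMem _ _ _ hks, Pi.add_apply, hvk, hwk, add_zero]
    rw [h0]
    exact dvd_zero _
end
end

section
/- Let n ≥ 1, let F, G be coprime completely reducible homogeneous polynomials of the same degree d ≥ 1 in R = MvPolynomial (Fin (n+1)) ℂ, let P_1 = F, P_2 = G, P_3, …, P_k be pairwise distinct completely reducible members of the pencil 𝒫 with product Q̃ and radical Q, and let a_i = (Q/Q̃)·(F·∂_iG − G·∂_iF) and D = det(∂_j a_i)_{0≤i,j≤n}. Then Q^{n−1} divides D. -/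
open MvPolynomial

noncomputable section

/-!
Fix a linear factor `A` of `Q`, of multiplicity `e + 1` in `Q̃`. As `F` and `G` are coprime, `A`
divides exactly one member `P_s`, so `A ^ (e + 1) ∣ P_s`; for any other member `P_t`,
`P_s dP_t - P_t dP_s` is a nonzero multiple of `ω₀ = (Q̃/Q) ω`, and expanding `P_s = A ^ (e + 1) S`
shows that the coefficients `γ_j a_i - γ_i a_j` of `ω ∧ dA` (with `dA = ∑ γ_j dx_j`) are divisible
by `A`. Hence `a ≡ λ ∇A (mod A)`: each row of the Jacobian matrix is a combination of two fixed rows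
plus `A` times a row, and multilinearity of the determinant gives `A ^ (n - 1) ∣ D`. Distinct linear
factors are non-associated primes, so their contributions multiply to `Q ^ (n - 1) ∣ D`.
-/

open Finset in
theorem Matrix.pow_dvd_det_mul_add_smul {R ι : Type*} [CommRing R] [Fintype ι] [DecidableEq ι]
    {r : ℕ} (U : Matrix ι (Fin r) R) (V : Matrix (Fin r) ι R) (a : R) (N : Matrix ι ι R) :
    a ^ (Fintype.card ι - r) ∣ (U * V + a • N).det := by
  -- Row `i` is `∑ t : Option (Fin r), coeff i t • row i t`, with `none` standing for `a • N i`.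
  -- In the multilinear expansion, a term using some row `V t` twice vanishes, and every other
  -- term uses `a • N i` for at least `card ι - r` indices `i`.
  let coeff : ι → Option (Fin r) → R := fun i t => t.elim a (U i)
  let row : ι → Option (Fin r) → ι → R := fun i t => t.elim (N i) V
  have hrows : U * V + a • N = fun i => ∑ t, coeff i t • row i t := by
    ext i j
    simp only [Matrix.add_apply, Matrix.mul_apply, Pi.smul_apply, Matrix.smul_apply, smul_eq_mul,
      Finset.sum_apply, Fintype.sum_option, coeff, row, add_comm]
    rfl
  rw [Matrix.det, hrows, ← AlternatingMap.coe_multilinearMap, MultilinearMap.map_sum]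
  refine dvd_sum fun f _ => ?_
  rw [AlternatingMap.coe_multilinearMap, AlternatingMap.map_smul_univ, smul_eq_mul]
  by_cases hinj : Set.InjOn f {i | f i ≠ none}
  · apply Dvd.dvd.mul_right
    have hsome : #{i | ¬f i = none} ≤ r := by
      simpa using card_le_card_of_injOn f (t := univ.erase none) (fun i hi => by simpa using hi)
        (by simpa using hinj)
    have hnone : Fintype.card ι - r ≤ #{i | f i = none} := by
      have := card_filter_add_card_filter_not (s := univ) (fun i => f i = none)
      simp only [card_univ] at this
      omega
    calc a ^ (Fintype.card ι - r) ∣ a ^ #{i | f i = none} := pow_dvd_pow a hnone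
      _ = ∏ i ∈ {i | f i = none}, coeff i (f i) := by
        rw [prod_congr rfl fun i hi => by rw [(mem_filter.1 hi).2]]
        exact (prod_const a).symm
      _ ∣ ∏ i, coeff i (f i) := prod_dvd_prod_of_subset _ _ _ (subset_univ _)
  · obtain ⟨i, hi, j, -, hfij, hij⟩ : ∃ i, f i ≠ none ∧ ∃ j, f j ≠ none ∧ f i = f j ∧ i ≠ j := by
      simpa [Set.InjOn] using hinj
    obtain ⟨t, ht⟩ := Option.ne_none_iff_exists'.1 hi
    rw [(Matrix.detRowAlternating).map_eq_zero_of_eq _ (i := i) (j := j)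
      (by simp only [row, ← hfij, ht]; rfl) hij, mul_zero]
    exact dvd_zero _

namespace MvPolynomial

variable {σ R : Type*}

section CommRing

variable [CommRing R]

theorem pderiv_wronskian_pencil (F G : MvPolynomial σ R) (a b a' b' : R) (i : σ) :
    (C a * F + C b * G) * pderiv i (C a' * F + C b' * G) -
        (C a' * F + C b' * G) * pderiv i (C a * F + C b * G) =
      C (a * b' - b * a') * (F * pderiv i G - G * pderiv i F) := by
  simp only [map_add, pderiv_C_mul, map_sub, map_mul]
  ring

theorem pow_dvd_wedge_of_pow_dvd {A P : MvPolynomial σ R} {γ : σ → R}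
    (hA : ∀ i, pderiv i A = C (γ i)) {m : ℕ} (hP : A ^ m ∣ P) (Q : MvPolynomial σ R) (i j : σ) :
    A ^ m ∣ C (γ j) * (P * pderiv i Q - Q * pderiv i P) -
      C (γ i) * (P * pderiv j Q - Q * pderiv j P) := by
  obtain ⟨S, rfl⟩ := hP
  refine ⟨C (γ j) * (S * pderiv i Q - Q * pderiv i S) -
    C (γ i) * (S * pderiv j Q - Q * pderiv j S), ?_⟩
  simp only [Derivation.leibniz, Derivation.leibniz_pow, hA, smul_eq_mul, nsmul_eq_mul]
  ring

variable [IsDomain R]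

theorem dvd_wedge_of_pow_dvd {A P Q W : MvPolynomial σ R} {γ : σ → R}
    (hA : Prime A) (hγ : ∀ i, pderiv i A = C (γ i)) {e : ℕ} (hP : A ^ (e + 1) ∣ P)
    (hW : ¬A ∣ W) {u : MvPolynomial σ R} (hu : IsUnit u) {a : σ → MvPolynomial σ R}
    (ha : ∀ i, P * pderiv i Q - Q * pderiv i P = u * (a i * (A ^ e * W))) (i j : σ) :
    A ∣ C (γ j) * a i - C (γ i) * a j := by
  have h := pow_dvd_wedge_of_pow_dvd hγ hP Q i j
  rw [ha, ha, show C (γ j) * (u * (a i * (A ^ e * W))) - C (γ i) * (u * (a j * (A ^ e * W))) =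
    A ^ e * (u * (W * (C (γ j) * a i - C (γ i) * a j))) by ring, pow_succ,
    mul_dvd_mul_iff_left (pow_ne_zero e hA.ne_zero), hu.dvd_mul_left] at h
  exact (hA.dvd_or_dvd h).resolve_left hW

end CommRing

theorem pow_dvd_det_jacobian_of_dvd_wedge {K : Type*} [Field K] [Fintype σ] [DecidableEq σ]
    {A : MvPolynomial σ K} {γ : σ → K} (hA : ∀ i, pderiv i A = C (γ i)) {i₀ : σ} (hi₀ : γ i₀ ≠ 0)
    {a : σ → MvPolynomial σ K} (ha : ∀ i, A ∣ C (γ i₀) * a i - C (γ i) * a i₀) :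
    A ^ (Fintype.card σ - 2) ∣ (Matrix.of fun i j => pderiv j (a i)).det := by
  choose b hb using ha
  set b' : σ → MvPolynomial σ K := fun i => C (γ i₀)⁻¹ * b i
  have hab : ∀ i, a i = C (γ i / γ i₀) * a i₀ + A * b' i := fun i => by
    have hinv : C (γ i₀)⁻¹ * C (γ i₀) = (1 : MvPolynomial σ K) := by
      rw [← C_mul, inv_mul_cancel₀ hi₀, C_1]
    rw [div_eq_mul_inv, C_mul]
    linear_combination C (γ i₀)⁻¹ * hb i - a i * hinv
  have hjac : (Matrix.of fun i j => pderiv j (a i)) =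
      Matrix.of (fun i => ![C (γ i / γ i₀), b' i]) *
          Matrix.of ![fun j => pderiv j (a i₀), fun j => C (γ j)] +
        A • Matrix.of fun i j => pderiv j (b' i) := by
    ext i j : 1
    simp only [Matrix.of_apply, Matrix.add_apply, Matrix.mul_apply, Matrix.smul_apply,
      Fin.sum_univ_two, Matrix.cons_val_zero, Matrix.cons_val_one, hab i, map_add,
      Derivation.leibniz, derivation_C, hA, smul_eq_mul]
    ring
  rw [hjac]
  exact Matrix.pow_dvd_det_mul_add_smul _ _ _ _

section Homogeneous

variable {K : Type*} [Field K] {p q : MvPolynomial σ K}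

theorem irreducible_of_isHomogeneous_one (hp : p.IsHomogeneous 1) (hp₀ : p ≠ 0) :
    Irreducible p := by
  refine irreducible_of_totalDegree_eq_one (hp.totalDegree hp₀) fun x hx => ?_
  obtain ⟨d, hd⟩ := ne_zero_iff.1 hp₀
  exact (ne_zero_of_dvd_ne_zero hd (hx d)).isUnit

theorem IsHomogeneous.exists_eq_C_mul_of_dvd (hp : p.IsHomogeneous 1) (hp₀ : p ≠ 0)
    (hq : q.IsHomogeneous 1) (hpq : p ∣ q) : ∃ t : K, q = C t * p := by
  obtain ⟨w, rfl⟩ := hpq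
  rcases eq_or_ne w 0 with rfl | hw
  · exact ⟨0, by simp⟩
  have hdeg := hq.totalDegree (mul_ne_zero hp₀ hw)
  rw [totalDegree_mul_of_isDomain hp₀ hw, hp.totalDegree hp₀] at hdeg
  exact ⟨coeff 0 w, by rw [← totalDegree_eq_zero_iff_eq_C.1 (by omega), mul_comm]⟩

theorem IsHomogeneous.exists_pderiv_eq_C [Fintype σ] (hp : p.IsHomogeneous 1) (hp₀ : p ≠ 0) :
    ∃ γ : σ → K, (∀ i, pderiv i p = C (γ i)) ∧ ∃ i₀, γ i₀ ≠ 0 := by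
  have hγ : ∀ i, pderiv i p = C (coeff 0 (pderiv i p)) := fun i =>
    totalDegree_eq_zero_iff_eq_C.1 ((totalDegree_zero_iff_isHomogeneous σ).2 hp.pderiv)
  refine ⟨fun i => coeff 0 (pderiv i p), hγ, not_forall.1 fun h => hp₀ ?_⟩
  have hzero : ∀ i, pderiv i p = 0 := fun i => by rw [hγ i, C_eq_zero]; exact h i
  simpa [hzero] using hp.sum_X_mul_pderiv.symm

end Homogeneous

end MvPolynomial

theorem Prime.pow_dvd_of_pow_dvd_prod {M ι : Type*} [CommMonoidWithZero M] [IsCancelMulZero M]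
    [Fintype ι] [DecidableEq ι] {p : M} (hp : Prime p) {f : ι → M} {i : ι} {m : ℕ}
    (h : p ^ m ∣ ∏ j, f j) (hf : ∀ j ≠ i, ¬p ∣ f j) : p ^ m ∣ f i := by
  rw [← Finset.mul_prod_erase _ _ (Finset.mem_univ i)] at h
  refine hp.pow_dvd_of_dvd_mul_right m (fun hd => ?_) h
  obtain ⟨j, hj, hpj⟩ := (hp.dvd_finsetProd_iff f).1 hd
  exact hf j (Finset.ne_of_mem_erase hj) hpj

theorem RelPrime.not_dvd_of_dvd_pencil {n : ℕ} {F G p : MvPolynomial (Fin (n + 1)) ℂ}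
    (hFG : RelPrime n F G) (hp : ¬IsUnit p) {a b a' b' : ℂ} (hδ : a * b' ≠ b * a')
    (h : p ∣ C a * F + C b * G) : ¬p ∣ C a' * F + C b' * G := by
  intro h'
  have hδ : IsUnit (C (a * b' - b * a') : MvPolynomial (Fin (n + 1)) ℂ) :=
    (sub_ne_zero.2 hδ).isUnit.map C
  refine hp (hFG p ?_ ?_)
  · rw [← hδ.dvd_mul_left]
    convert dvd_sub (h.mul_left (C b')) (h'.mul_left (C b)) using 1
    simp only [map_sub, map_mul]
    ring
  · rw [← hδ.dvd_mul_left]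
    convert dvd_sub (h'.mul_left (C a)) (h.mul_left (C a')) using 1
    simp only [map_sub, map_mul]
    ring

theorem linear_factor_pow_dvd_jacobian {n k : ℕ} (hk : 2 ≤ k)
    {F G A W : MvPolynomial (Fin (n + 1)) ℂ} (hFG : RelPrime n F G) {c : Fin k → ℂ × ℂ}
    (hprop : ∀ i j, i ≠ j → (c i).1 * (c j).2 ≠ (c i).2 * (c j).1)
    {P : Fin k → MvPolynomial (Fin (n + 1)) ℂ} (hP : ∀ i, P i = C (c i).1 * F + C (c i).2 * G)
    (hA : IsLinearForm n A) {e : ℕ} (hAP : A ^ (e + 1) ∣ ∏ i, P i) (hW : ¬A ∣ W)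
    {a : Fin (n + 1) → MvPolynomial (Fin (n + 1)) ℂ}
    (ha : ∀ i, a i * (A ^ e * W) = F * pderiv i G - G * pderiv i F) :
    A ^ (n - 1) ∣ (Matrix.of fun i j => pderiv j (a i)).det := by
  obtain ⟨γ, hγ, i₀, hi₀⟩ := hA.2.exists_pderiv_eq_C hA.1
  have hAprime : Prime A := (irreducible_of_isHomogeneous_one hA.2 hA.1).prime
  obtain ⟨s, -, hs⟩ := (hAprime.dvd_finsetProd_iff P).1 ((dvd_pow_self A e.succ_ne_zero).trans hAP)
  obtain ⟨t, hts⟩ := Fintype.exists_ne_of_one_lt_card (by rw [Fintype.card_fin]; omega) s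
  have hPs : A ^ (e + 1) ∣ P s := hAprime.pow_dvd_of_pow_dvd_prod hAP fun t ht => by
    rw [hP] at hs ⊢
    exact hFG.not_dvd_of_dvd_pencil hAprime.not_isUnit (hprop s t ht.symm) hs
  have hδ : IsUnit (C ((c s).1 * (c t).2 - (c s).2 * (c t).1) : MvPolynomial (Fin (n + 1)) ℂ) :=
    (sub_ne_zero.2 (hprop s t hts.symm)).isUnit.map C
  have hwedge (i : Fin (n + 1)) : A ∣ C (γ i₀) * a i - C (γ i) * a i₀ :=
    dvd_wedge_of_pow_dvd (Q := P t) hAprime hγ hPs hW hδ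
      (fun l => by rw [hP s, hP t, pderiv_wronskian_pencil, ha l]) i i₀
  simpa using pow_dvd_det_jacobian_of_dvd_wedge hγ hi₀ hwedge

/-- Q^{n-1} divides the Jacobian determinant D = det(∂ⱼaᵢ) of the coefficients of
ω = (Q/Q̃)(F dG - G dF). -/
theorem radical_power_divides_jacobian
    (n k u : ℕ) (hk : 2 ≤ k)
    (F G : MvPolynomial (Fin (n + 1)) ℂ)
    (hcop : RelPrime n F G)
    (c : Fin k → ℂ × ℂ)
    (hprop : ∀ i j, i ≠ j → (c i).1 * (c j).2 ≠ (c i).2 * (c j).1)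
    (P : Fin k → MvPolynomial (Fin (n + 1)) ℂ)
    (hP : ∀ i, P i = C (c i).1 * F + C (c i).2 * G)
    (α : Fin u → MvPolynomial (Fin (n + 1)) ℂ)
    (hα : ∀ i, IsLinearForm n (α i))
    (hαprop : ∀ i j, i ≠ j → ∀ t : ℂ, α i ≠ C t * α j)
    (m : Fin u → ℕ) (hm : ∀ i, 1 ≤ m i)
    (hQt : ∏ i, P i = ∏ i, α i ^ m i)
    (a : Fin (n + 1) → MvPolynomial (Fin (n + 1)) ℂ)
    (ha : ∀ i, a i * ∏ j, α j ^ (m j - 1) = F * pderiv i G - G * pderiv i F) :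
    (∏ i, α i) ^ (n - 1) ∣ (Matrix.of fun i j => pderiv j (a i)).det := by
  have hprime (l : Fin u) : Prime (α l) :=
    (irreducible_of_isHomogeneous_one (hα l).2 (hα l).1).prime
  have hnd (l l' : Fin u) (hll' : l ≠ l') : ¬α l ∣ α l' := fun hdvd => by
    obtain ⟨t, ht⟩ := (hα l).2.exists_eq_C_mul_of_dvd (hα l).1 (hα l').2 hdvd
    exact hαprop l' l hll'.symm t ht
  rw [← Finset.prod_pow]
  refine Fintype.prod_dvd_of_isRelPrime
    (fun l l' hll' => ((hprime l).irreducible.isRelPrime_iff_not_dvd.2 (hnd l l' hll')).pow)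
    fun l => ?_
  obtain ⟨e, he⟩ := Nat.exists_eq_add_of_le' (hm l)
  refine linear_factor_pow_dvd_jacobian hk hcop hprop hP (hα l) (e := e)
    (W := ∏ j ∈ Finset.univ.erase l, α j ^ (m j - 1)) ?_ ?_ fun i => ?_
  · rw [hQt, ← he]
    exact Finset.dvd_prod_of_mem _ (Finset.mem_univ l)
  · intro hdvd
    obtain ⟨j, hj, hdj⟩ := ((hprime l).dvd_finsetProd_iff _).1 hdvd
    exact hnd l j (Finset.ne_of_mem_erase hj).symm ((hprime l).dvd_of_dvd_pow hdj)
  · rw [← ha i, ← Finset.mul_prod_erase _ _ (Finset.mem_univ l), he, Nat.add_sub_cancel]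
end
end

section
/- Let n ≥ 2 and let ω = Σ_{i=0}^n a_i dx_i be a polynomial 1-form defining a degree-d foliation ℱ on ℙⁿ: the a_i ∈ MvPolynomial (Fin (n+1)) ℂ are homogeneous of degree d+1, have no common non-unit factor, satisfy Σ_i x_i a_i = 0, and satisfy the integrability condition a_i(∂_j a_k − ∂_k a_j) + a_j(∂_k a_i − ∂_i a_k) + a_k(∂_i a_j − ∂_j a_i) = 0 for all i, j, k. Assume the Gauss map of ℱ is non-degenerate, i.e. D = det(∂_j a_i)_{0≤i,j≤n} ≠ 0. If ℓ_1, …, ℓ_N are pairwise non-proportional linear forms, each invariant for ℱ (writing ℓ_t = Σ_i c_i x_i, the form ℓ_t divides c_i·a_j − c_j·a_i for all i, j), then N·(n−1) ≤ (n+1)·d; that is, ℱ has at most ((n+1)/(n−1))·deg(ℱ) invariant hyperplanes. -/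
/-!
If the hyperplane `ℓ = Σ cᵢ xᵢ` is invariant, then `aᵢ = cᵢ g + ℓ hᵢ` for some `g` and `hᵢ`,
so the Jacobian matrix `(∂ⱼ aᵢ)` of the Gauss map is a matrix of rank at most two plus `ℓ`
times another matrix, and hence `ℓ^(n-1)` divides its determinant `D`. Non-proportional linear
forms are non-associated primes, so `∏ₜ ℓₜ^(n-1)` divides `D`; as `D ≠ 0` is homogeneous of
degree `(n+1)d`, comparing degrees gives `N(n-1) ≤ (n+1)d`.
-/

open MvPolynomial

noncomputable section

namespace Matrix

theorem pow_card_sub_two_dvd_det_vecMulVec_add_vecMulVec_add_smul {ι S : Type*} [Fintype ι]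
    [DecidableEq ι] [CommRing S] (u v w z : ι → S) (E : Matrix ι ι S) (t : S) :
    t ^ (Fintype.card ι - 2) ∣ (vecMulVec u v + vecMulVec w z + t • E).det := by
  let coeff : ι → Fin 3 → S := fun i => ![u i, w i, t]
  let row : ι → Fin 3 → ι → S := fun i => ![v, z, E i]
  have hrow : vecMulVec u v + vecMulVec w z + t • E = fun i => ∑ r, coeff i r • row i r := by
    ext i j
    simp [coeff, row, Fin.sum_univ_three, vecMulVec_apply]
  rw [det, hrow, ← AlternatingMap.coe_multilinearMap, MultilinearMap.map_sum]
  refine Finset.dvd_sum fun r _ => ?_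
  rw [MultilinearMap.map_smul_univ, smul_eq_mul]
  -- Rows `i` with `r i ≠ 2` are `v` or `z`; if two of them coincide the term vanishes,
  -- otherwise at most two factors differ from `t`.
  by_cases hinj : Set.InjOn r {i | r i ≠ 2}
  · have hfew : (Finset.univ.filter fun i => ¬ r i = 2).card ≤ 2 :=
      calc _ ≤ (Finset.univ.erase (2 : Fin 3)).card :=
            Finset.card_le_card_of_injOn r (fun i hi => by simpa using hi)
              (by simpa [Set.InjOn] using hinj)
        _ = 2 := rfl
    have hmany : Fintype.card ι - 2 ≤ (Finset.univ.filter fun i => r i = 2).card := by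
      have := Finset.card_filter_add_card_filter_not (s := Finset.univ) (fun i => r i = 2)
      simp only [Finset.card_univ] at this
      omega
    refine Dvd.dvd.mul_right ?_ _
    rw [← Finset.prod_filter_mul_prod_filter_not Finset.univ (fun i => r i = 2)]
    refine Dvd.dvd.mul_right ?_ _
    rw [Finset.prod_congr rfl (g := fun _ => t) (fun i hi => by simp_all [coeff]),
      Finset.prod_const]
    exact pow_dvd_pow t hmany
  · obtain ⟨i, hi, j, -, hrij, hij⟩ :
        ∃ i, r i ≠ 2 ∧ ∃ j, r j ≠ 2 ∧ r i = r j ∧ i ≠ j := by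
      simpa [Set.InjOn] using hinj
    have hrow_eq : row i (r i) = row j (r j) := by
      obtain h | h : r i = 0 ∨ r i = 1 := by omega
      all_goals simp [row, ← hrij, h]
    rw [AlternatingMap.coe_multilinearMap, AlternatingMap.map_eq_zero_of_eq _ _ hrow_eq hij,
      mul_zero]
    exact dvd_zero _

end Matrix

namespace MvPolynomial

variable {σ R K : Type*} [CommRing R] [Field K]

theorem IsHomogeneous.det {ι : Type*} [Fintype ι] [DecidableEq ι]
    {M : Matrix ι ι (MvPolynomial σ R)} {k : ℕ} (hM : ∀ i j, (M i j).IsHomogeneous k) :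
    M.det.IsHomogeneous (Fintype.card ι * k) := by
  rw [Matrix.det_apply]
  refine IsHomogeneous.sum _ _ _ fun p _ => ?_
  have hprod : (∏ i, M (p i) i).IsHomogeneous (Fintype.card ι * k) := by
    simpa using IsHomogeneous.prod Finset.univ _ (fun _ => k) fun i _ => hM (p i) i
  rcases Int.units_eq_one_or (Equiv.Perm.sign p) with h | h <;>
    simp [h, hprod, hprod.neg]

theorem IsHomogeneous.le_of_dvd [IsDomain R] {P Q : MvPolynomial σ R} {p q : ℕ}
    (hP : P.IsHomogeneous p) (hQ : Q.IsHomogeneous q) (hQ0 : Q ≠ 0) (hPQ : P ∣ Q) : p ≤ q := by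
  obtain ⟨S, rfl⟩ := hPQ
  obtain ⟨hP0, hS0⟩ := mul_ne_zero_iff.mp hQ0
  have := totalDegree_mul_of_isDomain hP0 hS0
  rw [hP.totalDegree hP0, hQ.totalDegree hQ0] at this
  omega

theorem irreducible_of_isHomogeneous_one_s11 {p : MvPolynomial σ K} (hp : p.IsHomogeneous 1)
    (hp0 : p ≠ 0) : Irreducible p := by
  refine irreducible_of_totalDegree_eq_one (hp.totalDegree hp0) fun x hx => ?_
  obtain ⟨m, hm⟩ := ne_zero_iff.mp hp0
  exact isUnit_iff_ne_zero.mpr fun hx0 => hm (zero_dvd_iff.mp (hx0 ▸ hx m))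

theorem isRelPrime_of_forall_ne_C_mul {p q : MvPolynomial σ K} (hp : Irreducible p)
    (hq : Irreducible q) (hpq : ∀ s, q ≠ C s * p) : IsRelPrime p q := by
  refine hp.isRelPrime_iff_not_dvd.mpr fun hdvd => ?_
  obtain ⟨u, hu⟩ := hp.associated_of_dvd hq hdvd
  obtain ⟨s, -, hs⟩ := isUnit_iff_eq_C_of_isReduced.mp u.isUnit
  exact hpq s (by rw [← hu, hs, mul_comm])

theorem pderiv_sum_C_mul_X [Fintype σ] [DecidableEq σ] (c : σ → R) (j : σ) :
    pderiv j (∑ i, C (c i) * X i) = C (c j) := by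
  simp [pderiv_X, Pi.single_apply]

theorem pow_dvd_det_pderiv_of_invariant [Fintype σ] [DecidableEq σ] (a : σ → MvPolynomial σ K)
    {c : σ → K} (hc : c ≠ 0)
    (hinv : ∀ i j, (∑ l, C (c l) * X l) ∣ C (c i) * a j - C (c j) * a i) :
    (∑ l, C (c l) * X l) ^ (Fintype.card σ - 2) ∣
      (Matrix.of fun i j => pderiv j (a i)).det := by
  set ℓ := ∑ l, C (c l) * X l
  obtain ⟨k, hk⟩ : ∃ k, c k ≠ 0 := Function.ne_iff.mp hc
  choose q hq using hinv k
  have hCk : C (c k)⁻¹ * C (c k) = (1 : MvPolynomial σ K) := by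
    rw [← C_mul, inv_mul_cancel₀ hk, C_1]
  obtain ⟨g, h, ha⟩ : ∃ g h, ∀ i, a i = C (c i) * g + ℓ * h i :=
    ⟨C (c k)⁻¹ * a k, fun i => C (c k)⁻¹ * q i, fun i => by
      linear_combination C (c k)⁻¹ * hq i - a i * hCk⟩
  have hℓ : ∀ j, pderiv j ℓ = C (c j) := pderiv_sum_C_mul_X c
  have hjac : (Matrix.of fun i j => pderiv j (a i)) =
      Matrix.vecMulVec (fun i => C (c i)) (fun j => pderiv j g) +
        Matrix.vecMulVec h (fun j => C (c j)) + ℓ • Matrix.of fun i j => pderiv j (h i) := by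
    refine Matrix.ext fun i j => ?_
    simp only [Matrix.of_apply, Matrix.add_apply, Matrix.smul_apply, Matrix.vecMulVec_apply,
      smul_eq_mul]
    rw [ha i, map_add, pderiv_C_mul, pderiv_mul, hℓ]
    ring
  rw [hjac]
  exact Matrix.pow_card_sub_two_dvd_det_vecMulVec_add_vecMulVec_add_smul _ _ _ _ _ _

end MvPolynomial

theorem invariant_hyperplanes_bound_general
    (n d : ℕ)
    -- a degree-d foliation: coefficients aᵢ homogeneous of degree d+1, without common
    -- non-unit factor, annihilated by the radial field and integrable
    (a : Fin (n + 1) → MvPolynomial (Fin (n + 1)) ℂ)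
    (hahom : ∀ i, (a i).IsHomogeneous (d + 1))
    -- the Gauss map is non-degenerate
    (hD : (Matrix.of fun i j => pderiv j (a i)).det ≠ 0)
    -- pairwise non-proportional invariant linear forms ℓ_t = Σᵢ cf t i · xᵢ
    (N : ℕ)
    (cf : Fin N → Fin (n + 1) → ℂ)
    (ℓ : Fin N → MvPolynomial (Fin (n + 1)) ℂ)
    (hℓdef : ∀ t, ℓ t = ∑ i, C (cf t i) * X i)
    (hℓ0 : ∀ t, ℓ t ≠ 0)
    (hℓprop : ∀ t₁ t₂, t₁ ≠ t₂ → ∀ s : ℂ, ℓ t₁ ≠ C s * ℓ t₂)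
    (hinv : ∀ t, ∀ i j : Fin (n + 1), ℓ t ∣ (C (cf t i) * a j - C (cf t j) * a i)) :
    N * (n - 1) ≤ (n + 1) * d := by
  have hlin : ∀ t, (ℓ t).IsHomogeneous 1 := fun t =>
    hℓdef t ▸ IsHomogeneous.sum _ _ _ fun i _ => isHomogeneous_C_mul_X _ _
  have hirr : ∀ t, Irreducible (ℓ t) := fun t =>
    irreducible_of_isHomogeneous_one_s11 (hlin t) (hℓ0 t)
  have hdvd : ∀ t, ℓ t ^ (n - 1) ∣ (Matrix.of fun i j => pderiv j (a i)).det := fun t => by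
    have hc : cf t ≠ 0 := fun h => hℓ0 t (by simp [hℓdef, h])
    simpa [← hℓdef] using pow_dvd_det_pderiv_of_invariant a hc (hℓdef t ▸ hinv t)
  have hcop : Pairwise fun t t' => IsRelPrime (ℓ t ^ (n - 1)) (ℓ t' ^ (n - 1)) :=
    fun t t' htt' => (isRelPrime_of_forall_ne_C_mul (hirr t) (hirr t') (hℓprop t' t htt'.symm)).pow
  have hdeg := (IsHomogeneous.prod _ _ _ fun t _ => (hlin t).pow (n - 1)).le_of_dvd
    (IsHomogeneous.det fun i j => (hahom i).pderiv) hD (Fintype.prod_dvd_of_isRelPrime hcop hdvd)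
  simpa [mul_comm] using hdeg

/-- A degree-d foliation on ℙⁿ with non-degenerate Gauss map has at most
((n+1)/(n-1))·d invariant hyperplanes: if ℓ₁, …, ℓ_N are pairwise non-proportional
invariant linear forms then N·(n-1) ≤ (n+1)·d. -/
theorem invariant_hyperplanes_bound
    (n d : ℕ) (hn : 2 ≤ n)
    -- a degree-d foliation: coefficients aᵢ homogeneous of degree d+1, without common
    -- non-unit factor, annihilated by the radial field and integrable
    (a : Fin (n + 1) → MvPolynomial (Fin (n + 1)) ℂ)
    (hahom : ∀ i, (a i).IsHomogeneous (d + 1))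
    (hnocommon : ∀ p : MvPolynomial (Fin (n + 1)) ℂ, (∀ i, p ∣ a i) → IsUnit p)
    (hradial : ∑ i, X i * a i = 0)
    (hint : ∀ i j k : Fin (n + 1),
      a i * (pderiv j (a k) - pderiv k (a j)) +
      a j * (pderiv k (a i) - pderiv i (a k)) +
      a k * (pderiv i (a j) - pderiv j (a i)) = 0)
    -- the Gauss map is non-degenerate
    (hD : (Matrix.of fun i j => pderiv j (a i)).det ≠ 0)
    -- pairwise non-proportional invariant linear forms ℓ_t = Σᵢ cf t i · xᵢ
    (N : ℕ)
    (cf : Fin N → Fin (n + 1) → ℂ)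
    (ℓ : Fin N → MvPolynomial (Fin (n + 1)) ℂ)
    (hℓdef : ∀ t, ℓ t = ∑ i, C (cf t i) * X i)
    (hℓ0 : ∀ t, ℓ t ≠ 0)
    (hℓprop : ∀ t₁ t₂, t₁ ≠ t₂ → ∀ s : ℂ, ℓ t₁ ≠ C s * ℓ t₂)
    (hinv : ∀ t, ∀ i j : Fin (n + 1), ℓ t ∣ (C (cf t i) * a j - C (cf t j) * a i)) :
    N * (n - 1) ≤ (n + 1) * d :=
  invariant_hyperplanes_bound_general n d a hahom hD N cf ℓ hℓdef hℓ0 hℓprop hinv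
end
end

section
/- Let n ≥ 2 and let λ_0, …, λ_n ∈ ℂ be all nonzero with Σ_{i=0}^n λ_i = 0. Set a_i = λ_i · ∏_{j≠i} x_j ∈ MvPolynomial (Fin (n+1)) ℂ (so that ω = Σ_i a_i dx_i is the polynomial form associated to the logarithmic form Σ_i λ_i dx_i/x_i). Then: (a) Σ_i x_i a_i = 0; (b) for each i, the coordinate hyperplane x_i = 0 is invariant for ω, i.e. x_i divides a_k for every k ≠ i; and (c) the Jacobian determinant det(∂_j a_i)_{0≤i,j≤n} is not the zero polynomial. Hence ω defines a degree-(n−1) foliation with non-degenerate Gauss map that leaves invariant exactly (n+1) = ((n+1)/(n−1))·(n−1) hyperplanes, showing the bound of the invariant-hyperplane proposition is sharp. -/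
open MvPolynomial

noncomputable section

/-!
At the point `(1, …, 1)` the Jacobian matrix of `aᵢ = λᵢ ∏_{j ≠ i} xⱼ` becomes
`diag(λ) · (J - I)`, with `J` the all-ones matrix. Since `det (J - I) = (-1)ⁿ n ≠ 0` and all
`λᵢ ≠ 0`, the Jacobian determinant has a nonzero value there, so it is not the zero polynomial.
-/

theorem Matrix.det_of_ite_eq_zero_one {ι R : Type*} [Fintype ι] [DecidableEq ι] [CommRing R] :
    (Matrix.of fun i j : ι => if i = j then (0 : R) else 1).det =
      (-1) ^ Fintype.card ι * (1 - Fintype.card ι) := by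
  have h : (Matrix.of fun i j : ι => if i = j then (0 : R) else 1) =
      -(1 + Matrix.replicateCol Unit (fun _ : ι => (1 : R)) *
        Matrix.replicateRow Unit (fun _ : ι => (-1 : R))) := by
    ext i j
    by_cases hij : i = j <;> simp [Matrix.mul_apply, hij]
  rw [h, Matrix.det_neg, Matrix.det_one_add_replicateCol_mul_replicateRow]
  simp [dotProduct, sub_eq_add_neg]

theorem MvPolynomial.eval_one_pderiv_prod_X {σ R : Type*} [CommSemiring R] [DecidableEq σ]
    (s : Finset σ) (j : σ) :
    eval 1 (pderiv j (∏ l ∈ s, X l : MvPolynomial σ R)) = if j ∈ s then 1 else 0 := by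
  induction s using Finset.induction_on with
  | empty => simp
  | insert l s hl ih =>
    rw [Finset.prod_insert hl, pderiv_mul, map_add, map_mul, map_mul, ih]
    by_cases hjl : j = l
    · subst hjl
      simp [hl]
    · simp [hjl, pderiv_X_of_ne (Ne.symm hjl)]

/-- Sharpness example: for λ₀, …, λₙ all nonzero with Σλᵢ = 0, the form
ω = Σᵢ aᵢ dxᵢ with aᵢ = λᵢ·∏_{j≠i} xⱼ (coming from the logarithmic form Σ λᵢ dxᵢ/xᵢ)
satisfies (a) Σ xᵢaᵢ = 0, (b) every coordinate hyperplane xᵢ = 0 is invariant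
(xᵢ divides aₖ for all k ≠ i), and (c) its Jacobian determinant is nonzero. -/
theorem logarithmic_example_sharp
    (n : ℕ) (hn : 2 ≤ n)
    (lam : Fin (n + 1) → ℂ)
    (hlam : ∀ i, lam i ≠ 0) (hsum : ∑ i, lam i = 0)
    (a : Fin (n + 1) → MvPolynomial (Fin (n + 1)) ℂ)
    (ha : ∀ i, a i = C (lam i) * ∏ j ∈ Finset.univ.erase i, X j) :
    (∑ i, X i * a i = 0) ∧
    (∀ i k : Fin (n + 1), k ≠ i → X i ∣ a k) ∧
    (Matrix.of fun i j => pderiv j (a i)).det ≠ 0 := by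
  refine ⟨?_, fun i k hki => ?_, fun hdet => ?_⟩
  · have hX_mul : ∀ i, X i * a i = C (lam i) * ∏ j, X j := fun i => by
      rw [ha i, mul_left_comm, Finset.mul_prod_erase _ _ (Finset.mem_univ i)]
    simp_rw [hX_mul, ← Finset.sum_mul, ← map_sum, hsum, map_zero, zero_mul]
  · rw [ha k]
    exact (Finset.dvd_prod_of_mem _ (Finset.mem_erase.2 ⟨hki.symm, Finset.mem_univ i⟩)).mul_left _
  · have hjac_at_one : (eval 1).mapMatrix (Matrix.of fun i j => pderiv j (a i)) =
        Matrix.diagonal lam * Matrix.of fun i j => if i = j then 0 else 1 := by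
      ext i j
      simp [ha, eval_one_pderiv_prod_X, Matrix.diagonal_mul, eq_comm]
    have hoffdiag : (Matrix.of fun i j : Fin (n + 1) => if i = j then (0 : ℂ) else 1).det ≠ 0 := by
      rw [Matrix.det_of_ite_eq_zero_one, Fintype.card_fin]
      simpa using (by omega : n ≠ 0)
    have hdet_at_one := congrArg (eval 1) hdet
    rw [RingHom.map_det, hjac_at_one, Matrix.det_mul, Matrix.det_diagonal, map_zero] at hdet_at_one
    exact mul_ne_zero (Finset.prod_ne_zero_iff.2 fun i _ => hlam i) hoffdiag hdet_at_one
end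
end
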